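/- arXiv:0909.1424 — 2 statements merged into one kernel-verified Lean document; each statement's English description precedes it below -/
import Mathlib

section
/- Let d be a positive integer and let α ≤ β ≤ γ be elements of Ĩ(d). Set (R_α,S_α) := (α∖β, β∖α) and (R_γ,S_γ) := (γ∖β, β∖γ), and let T_α and W_γ be subsets of β̄×β whose multisets of first coordinates are R_α and R_γ and whose multisets of second coordinates are S_α and S_γ respectively. Then for every positive integer m, the map sending a nonvanishing skew-symmetric notched bitableau (P,Q) on β̄×β with rows (P_1,Q_1),…,(P_r,Q_r) to the sequence (θ_1,…,θ_r) with θ_i := P_i ∪̇ (β ∖ Q_i) is a bijection from the set of all degree-2m nonvanishing skew-symmetric notched bitableaux on β̄×β bounded by T_α, W_γ onto the set of all sequences θ_1 ≤ ⋯ ≤ θ_r of elements of Ĩ(d) such that for each i either θ_i < β or θ_i > β, α ≤ θ_1, θ_r ≤ γ, and the β-degrees of θ_1,…,θ_r sum to m (the β-degree of τ ∈ Ĩ(d) being one half of |β∖τ|). -/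
namespace OBRSKPaper

/-! ### Pairs of two-row arrays -/

/-- A pair of two-row arrays of positive integers: `π1` has top row `b` and bottom row `a`;
`π2` has top row `c` and bottom row `d`.  Columns are listed from left to right. -/
structure ArrayPair where
  a : List ℕ
  b : List ℕ
  c : List ℕ
  d : List ℕ

/-- The duality property for a list of (entry, dual entry) pairs: if `x ≤ y` then
`dual x ≥ dual y`, if `x < y` then `dual x > dual y`, and if `x = y` then `dual x = dual y`. -/
def DualityProp (l : List (ℕ × ℕ)) : Prop :=
  ∀ p ∈ l, ∀ q ∈ l,
    (p.1 ≤ q.1 → q.2 ≤ p.2) ∧ (p.1 < q.1 → q.2 < p.2) ∧ (p.1 = q.1 → p.2 = q.2)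

/-- The two-row array with top row `top` and bottom row `bot` is lexicographic:
the top row weakly decreases, and bottom-row entries weakly decrease below equal
top-row entries. -/
def LexTwoRow (top bot : List ℕ) : Prop :=
  ∀ k, k + 1 < top.length →
    top.getD (k+1) 0 ≤ top.getD k 0 ∧
    (top.getD (k+1) 0 = top.getD k 0 → bot.getD (k+1) 0 ≤ bot.getD k 0)

namespace ArrayPair

/-- The number of columns of each array of the pair. -/
def t (π : ArrayPair) : ℕ := π.b.length

/-- The degree of a pair of arrays: twice the number of columns. -/
def degree (π : ArrayPair) : ℕ := 2 * π.t

def eqLen (π : ArrayPair) : Prop :=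
  π.a.length = π.t ∧ π.c.length = π.t ∧ π.d.length = π.t

/-- The list of (entry, dual entry) pairs of a pair of arrays: the dual of `a i` is
`c (t+1-i)`, of `b i` is `d (t+1-i)`, of `c i` is `a (t+1-i)`, of `d i` is `b (t+1-i)`. -/
def entryDual (π : ArrayPair) : List (ℕ × ℕ) :=
  π.a.zip π.c.reverse ++ π.b.zip π.d.reverse ++ π.c.zip π.a.reverse ++ π.d.zip π.b.reverse

/-- `{π1, π2}` is a pair of skew-symmetric lexicographic arrays. -/
def SkewSymmLex (π : ArrayPair) : Prop :=
  π.eqLen ∧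
  (∀ x ∈ π.a ++ π.b ++ π.c ++ π.d, 0 < x) ∧
  LexTwoRow π.b π.a ∧
  LexTwoRow π.d π.c ∧
  (∀ p ∈ π.a.zip π.d.reverse, p.1 < p.2) ∧
  (∀ p ∈ π.b.zip π.c.reverse, p.1 < p.2) ∧
  DualityProp π.entryDual ∧
  (∀ i < π.t,
    (π.a.getD i 0 < π.b.getD i 0 → π.d.getD (π.t - 1 - i) 0 < π.c.getD (π.t - 1 - i) 0) ∧
    (π.b.getD i 0 < π.a.getD i 0 → π.c.getD (π.t - 1 - i) 0 < π.d.getD (π.t - 1 - i) 0))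

def Negative (π : ArrayPair) : Prop := ∀ p ∈ π.a.zip π.b, p.1 < p.2

def Positive (π : ArrayPair) : Prop := ∀ p ∈ π.a.zip π.b, p.2 < p.1

def Nonvanishing (π : ArrayPair) : Prop := ∀ p ∈ π.a.zip π.b, p.1 ≠ p.2

/-- The negative part of a pair: the columns of `π1` with `a i < b i`, together with
their dual columns of `π2` (those with `d j < c j`). -/
def negPart (π : ArrayPair) : ArrayPair where
  a := ((π.a.zip π.b).filter (fun p => decide (p.1 < p.2))).map Prod.fst
  b := ((π.a.zip π.b).filter (fun p => decide (p.1 < p.2))).map Prod.snd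
  c := ((π.c.zip π.d).filter (fun p => decide (p.2 < p.1))).map Prod.fst
  d := ((π.c.zip π.d).filter (fun p => decide (p.2 < p.1))).map Prod.snd

/-- The positive part of a pair: the columns of `π1` with `a i > b i`, together with
their dual columns of `π2`. -/
def posPart (π : ArrayPair) : ArrayPair where
  a := ((π.a.zip π.b).filter (fun p => decide (p.2 < p.1))).map Prod.fst
  b := ((π.a.zip π.b).filter (fun p => decide (p.2 < p.1))).map Prod.snd
  c := ((π.c.zip π.d).filter (fun p => decide (p.1 < p.2))).map Prod.fst
  d := ((π.c.zip π.d).filter (fun p => decide (p.1 < p.2))).map Prod.snd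

/-- The bijection ψ from pairs of arrays to pairs of multisets on ℕ²:
`{(b/a),(c/d)} ↦ ({(a i, b i)}, {(d i, c i)})`. -/
def toMS (π : ArrayPair) : Multiset (ℕ × ℕ) × Multiset (ℕ × ℕ) :=
  (↑(π.a.zip π.b), ↑(π.d.zip π.c))

/-- The pair corresponding to `{U1^(k), U2^(k)}` : the first `k` columns of `π1`
together with the last `k` columns of `π2`. -/
def prefixPair (π : ArrayPair) (k : ℕ) : ArrayPair :=
  ⟨π.a.take k, π.b.take k, π.c.drop (π.t - k), π.d.drop (π.t - k)⟩

end ArrayPair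

/-- Comparison placing columns in decreasing lexicographic order. -/
def lexSortKey : ℕ × ℕ → ℕ × ℕ → Bool := fun x y =>
  decide (y.1 < x.1 ∨ (x.1 = y.1 ∧ y.2 ≤ x.2))

/-- The involution `L` : `L {π1, π2} := {l(π1), lᵗ(π2)}`, where `l` switches the two rows
and rearranges columns so that the result is lexicographic, and `lᵗ` switches the two rows
and rearranges columns so that the transpose of the result is lexicographic. -/
def Lmap (π : ArrayPair) : ArrayPair :=
  let s1 := (π.a.zip π.b).mergeSort lexSortKey
  let s2 := (π.c.zip π.d).mergeSort lexSortKey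
  ⟨s1.map Prod.snd, s1.map Prod.fst, s2.map Prod.snd, s2.map Prod.fst⟩

/-! ### Notched bitableaux -/

/-- A notched bitableau: a pair of fillings (lists of rows, top to bottom). -/
structure Bitab where
  P : List (List ℕ)
  Q : List (List ℕ)

/-- Count, as an integer, of entries of the list that are `≤ z`. -/
def cntLE (l : List ℕ) (z : ℕ) : ℤ := ((l.filter (fun x => decide (x ≤ z))).length : ℤ)

/-- `diffLE A B A' B'` expresses `A − B ≤ A' − B'` for the multisets
`A − B := A ∪̇ (ℕ∖B)`: for every `z`, the number of elements `≤ z` of `A − B` is at least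
the number of elements `≤ z` of `A' − B'`. -/
def diffLE (A B A' B' : List ℕ) : Prop :=
  ∀ z : ℕ, cntLE A' z - cntLE B' z ≤ cntLE A z - cntLE B z

/-- `diffLT A B A' B'` expresses `A − B < A' − B'`. -/
def diffLT (A B A' B' : List ℕ) : Prop := diffLE A B A' B' ∧ ¬ diffLE A' B' A B

namespace Bitab

/-- The degree: total number of boxes of `P`. -/
def degree (B : Bitab) : ℕ := (B.P.map List.length).sum

def SameShape (B : Bitab) : Prop := B.P.map List.length = B.Q.map List.length

def RowStrict (B : Bitab) : Prop :=
  (∀ r ∈ B.P, r.Pairwise (· < ·)) ∧ (∀ r ∈ B.Q, r.Pairwise (· < ·))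

def EntriesPos (B : Bitab) : Prop :=
  (∀ r ∈ B.P, ∀ x ∈ r, 0 < x) ∧ (∀ r ∈ B.Q, ∀ x ∈ r, 0 < x)

def Semistandard (B : Bitab) : Prop :=
  B.SameShape ∧ B.RowStrict ∧ B.EntriesPos ∧
  ∀ i, i + 1 < B.P.length →
    diffLE (B.P.getD i []) (B.Q.getD i []) (B.P.getD (i+1) []) (B.Q.getD (i+1) [])

/-- Negative: semistandard and the last row satisfies `P_r − Q_r < ∅`. -/
def Negative (B : Bitab) : Prop :=
  B.Semistandard ∧ ∀ i, B.P.length = i + 1 → diffLT (B.P.getD i []) (B.Q.getD i []) [] []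

/-- Positive: semistandard and the first row satisfies `∅ < P_1 − Q_1`. -/
def Positive (B : Bitab) : Prop :=
  B.Semistandard ∧ (B.P ≠ [] → diffLT [] [] (B.P.getD 0 []) (B.Q.getD 0 []))

/-- Nonvanishing: semistandard and every row is negative or positive. -/
def Nonvanishing (B : Bitab) : Prop :=
  B.Semistandard ∧ ∀ i < B.P.length,
    diffLT (B.P.getD i []) (B.Q.getD i []) [] [] ∨ diffLT [] [] (B.P.getD i []) (B.Q.getD i [])

/-- The list of (entry, dual entry) pairs of a notched bitableau: the dual of the entry in
position `(i,j)` of `P` is the entry in position `(i, k_i+1−j)` of `Q` and vice versa. -/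
def entryDual (B : Bitab) : List (ℕ × ℕ) :=
  ((B.P.zip B.Q).map (fun pq => pq.1.zip pq.2.reverse)).flatten ++
  ((B.P.zip B.Q).map (fun pq => pq.2.zip pq.1.reverse)).flatten

/-- A skew-symmetric notched bitableau: semistandard, of even size, satisfying the
duality property. -/
def SkewSymm (B : Bitab) : Prop :=
  B.Semistandard ∧ (∀ r ∈ B.P, Even r.length) ∧ DualityProp B.entryDual

end Bitab

/-- The involution ι : reverse the order of the rows of `(Q, P)`. -/
def iota (B : Bitab) : Bitab := ⟨B.Q.reverse, B.P.reverse⟩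

/-! ### The OBRSK algorithm -/

/-- Insert `x` into the list `l` at (0-based) position `i`, shifting later entries right. -/
def insertAt (l : List ℕ) (i : ℕ) (x : ℕ) : List ℕ := l.take i ++ x :: l.drop i

/-- One row of bounded insertion: `x` bumps the smallest entry of the row that is `≥ x`
and `< b`; if there is no such entry, `x` is placed in a new box at the right end of the
entries `< b`.  Returns the new row, the bumped entry (if any), and the 1-indexed forward
position of the new/overwritten box. -/
def insertRowP (b x : ℕ) (row : List ℕ) : List ℕ × Option ℕ × ℕ :=
  match row.findIdx? (fun y => decide (x ≤ y ∧ y < b)) with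
  | some j => (row.set j x, some (row.getD j 0), j + 1)
  | none =>
      let j := (row.takeWhile (fun y => decide (y < b))).length
      (insertAt row j x, none, j + 1)

/-- Bounded insertion of `x` into the rows of `P`, bounded by `b`.  Returns the new rows
and the list of 1-indexed forward positions of the bumped/new boxes, row by row. -/
def insertP (b : ℕ) : List (List ℕ) → ℕ → List (List ℕ) × List ℕ
  | [], x => ([[x]], [1])
  | row :: rest, x =>
      match insertRowP b x row with
      | (row', none, j) => (row' :: rest, [j])
      | (row', some y, j) =>
          let (rest', js) := insertP b rest y
          (row' :: rest', j :: js)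

/-- Dual insertion of `x` into the rows of `Q`, at the backward positions recorded in `js`:
in each intermediate row the backward `j`-th entry is bumped, and in the final row the
incoming value is placed in a new box at the backward `j`-th position. -/
def insertQ : List (List ℕ) → List ℕ → ℕ → List (List ℕ)
  | rows, [], _ => rows
  | [], _ :: _, x => [[x]]
  | row :: rest, [j], x => insertAt row (row.length + 1 - j) x :: rest
  | row :: rest, j :: js, x =>
      row.set (row.length - j) x :: insertQ rest js (row.getD (row.length - j) 0)

/-- Modify the `k`-th (0-based) row of a list of rows. -/
def modifyRow (rows : List (List ℕ)) (k : ℕ) (f : List ℕ → List ℕ) : List (List ℕ) :=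
  rows.take k ++ (match rows.drop k with
    | [] => []
    | r :: rest => f r :: rest)

/-- One step of the OBRSK algorithm, applied with the quadruple
`(a_{i+1}, b_{i+1}, c_{t−i}, d_{t−i})`. -/
def obrskStep (PQ : List (List ℕ) × List (List ℕ)) (q : ℕ × ℕ × ℕ × ℕ) :
    List (List ℕ) × List (List ℕ) :=
  let (x, b, c, d) := q
  let Pjs := insertP b PQ.1 x
  let K := Pjs.2.length
  let Q' := insertQ PQ.2 Pjs.2 c
  (modifyRow Pjs.1 (K - 1) (fun r => r ++ [d]), modifyRow Q' (K - 1) (fun r => b :: r))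

/-- The list of quadruples `(a_{i+1}, b_{i+1}, c_{t−i}, d_{t−i})`, `i = 0, …, t−1`. -/
def ArrayPair.quads (π : ArrayPair) : List (ℕ × ℕ × ℕ × ℕ) :=
  π.a.zip (π.b.zip (π.c.reverse.zip π.d.reverse))

/-- The notched bitableau `(P^(i), Q^(i))` produced after `i` steps of the OBRSK algorithm. -/
def stepState (π : ArrayPair) (i : ℕ) : List (List ℕ) × List (List ℕ) :=
  (π.quads.take i).foldl obrskStep ([], [])

/-- The OBRSK correspondence on pairs of negative skew-symmetric lexicographic arrays:
`OBRSK {π1, π2} := (P^(t), Q^(t))`. -/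
def OBRSKneg (π : ArrayPair) : Bitab :=
  ⟨(stepState π π.t).1, (stepState π π.t).2⟩

/-- The OBRSK correspondence on pairs of positive skew-symmetric lexicographic arrays. -/
def OBRSKpos (π : ArrayPair) : Bitab := iota (OBRSKneg (Lmap π))

/-- The OBRSK correspondence on pairs of nonvanishing skew-symmetric lexicographic arrays:
the bitableau whose negative and positive parts are the OBRSK images of the negative and
positive parts of the pair. -/
def OBRSK (π : ArrayPair) : Bitab :=
  ⟨(OBRSKneg π.negPart).P ++ (OBRSKpos π.posPart).P,
   (OBRSKneg π.negPart).Q ++ (OBRSKpos π.posPart).Q⟩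

/-! ### The reverse step -/

/-- One row of reverse bounded insertion: the incoming entry `x` bumps the largest entry
of the row smaller than `x`.  Returns the new row, the bumped-out entry, and the 1-indexed
forward position of the bumped box. -/
def revBumpRow (x : ℕ) (row : List ℕ) : List ℕ × ℕ × ℕ :=
  let k := (row.filter (fun y => decide (y < x))).length
  (row.set (k - 1) x, row.getD (k - 1) 0, k)

/-- Reverse bounded insertion upward through the given rows (listed bottom-to-top);
returns the new rows, the ejected entry, and the positions of the bumped boxes. -/
def revInsertUp : List (List ℕ) → ℕ → List (List ℕ) × ℕ × List ℕ
  | [], x => ([], x, [])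
  | row :: rest, x =>
      let rj := revBumpRow x row
      let rec' := revInsertUp rest rj.2.1
      (rj.1 :: rec'.1, rec'.2.1, rj.2.2 :: rec'.2.2)

/-- Dual reverse insertion upward through the given rows of `Q` (listed bottom-to-top),
along the dual (backward) positions `js`; returns the new rows and the ejected entry. -/
def revInsertUpQ : List (List ℕ) → List ℕ → ℕ → List (List ℕ) × ℕ
  | rows, [], x => (rows, x)
  | [], _ :: _, x => ([], x)
  | row :: rest, j :: js, x =>
      let idx := row.length - j
      let rec' := revInsertUpQ rest js (row.getD idx 0)
      (row.set idx x :: rec'.1, rec'.2)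

/-- One reverse step of OBRSK: produces `(P', Q')` and the integers `a, b, c, d`. -/
def reverseStep (B : Bitab) : Bitab × ℕ × ℕ × ℕ × ℕ :=
  let b := (B.Q.flatten.min?).getD 0
  let s := B.Q.length - 1 - B.Q.reverse.findIdx (fun r => r.contains b)
  let d := ((B.P.getD s []).getLast?).getD 0
  let P1 := modifyRow B.P s List.dropLast
  let Q1 := modifyRow B.Q s List.tail
  let rowS := P1.getD s []
  let k0 := (rowS.filter (fun y => decide (y < b))).length
  let x := rowS.getD (k0 - 1) 0
  let rowS' := rowS.eraseIdx (k0 - 1)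
  let up := revInsertUp (P1.take s).reverse x
  let P' := up.1.reverse ++ rowS' :: P1.drop (s + 1)
  let rowQ := Q1.getD s []
  let vQ := rowQ.getD (rowQ.length - k0) 0
  let rowQ' := rowQ.eraseIdx (rowQ.length - k0)
  let upQ := revInsertUpQ (Q1.take s).reverse up.2.2 vQ
  let Q' := upQ.1.reverse ++ rowQ' :: Q1.drop (s + 1)
  (⟨P'.filter (fun r => decide (r ≠ [])), Q'.filter (fun r => decide (r ≠ []))⟩,
    up.2.1, b, upQ.2, d)

/-! ### Multisets on ℕ², chains, boundedness -/

/-- The order on multisets on ℕ² : `msLE S T` means `S ≤ T`, i.e.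
`S₍₁₎ − S₍₂₎ ≤ T₍₁₎ − T₍₂₎`. -/
def msLE (S T : Multiset (ℕ × ℕ)) : Prop :=
  ∀ z : ℕ,
    ((T.filter (fun p => p.1 ≤ z)).card : ℤ) - ((T.filter (fun p => p.2 ≤ z)).card : ℤ) ≤
    ((S.filter (fun p => p.1 ≤ z)).card : ℤ) - ((S.filter (fun p => p.2 ≤ z)).card : ℤ)

namespace Bitab

/-- `(P,Q)^up` : the multiset of pairs formed by the top rows. -/
def up (B : Bitab) : Multiset (ℕ × ℕ) := ↑((B.P.getD 0 []).zip (B.Q.getD 0 []))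

/-- `(P,Q)^down` : the multiset of pairs formed by the bottom rows. -/
def down (B : Bitab) : Multiset (ℕ × ℕ) :=
  ↑((B.P.getD (B.P.length - 1) []).zip (B.Q.getD (B.Q.length - 1) []))

end Bitab

/-- `σ` represents a dual pair of chains in ℕ² : `σ` is a pair of skew-symmetric
lexicographic arrays whose first array lists a chain (first coordinates strictly
increasing, second coordinates strictly decreasing along the columns). -/
def IsChainArr (σ : ArrayPair) : Prop :=
  σ.SkewSymmLex ∧ List.Chain' (· < ·) σ.a ∧ List.Chain' (· > ·) σ.b

/-- `σ` represents a dual pair of chains in the pair of skew-symmetric multisets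
represented by `π` : both chains are contained in the respective underlying sets, and for
each column of the chain array, the dual column within `π` of its leftmost occurrence
coincides with its dual column within `σ`. -/
def DualChainIn (π σ : ArrayPair) : Prop :=
  IsChainArr σ ∧
  (∀ x ∈ σ.a.zip σ.b, x ∈ π.a.zip π.b) ∧
  (∀ x ∈ σ.d.zip σ.c, x ∈ π.d.zip π.c) ∧
  (∀ i < σ.t,
    (π.c.getD (π.t - 1 - (π.b.zip π.a).findIdx (fun x => x == (σ.b.getD i 0, σ.a.getD i 0))) 0,
     π.d.getD (π.t - 1 - (π.b.zip π.a).findIdx (fun x => x == (σ.b.getD i 0, σ.a.getD i 0))) 0)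
      = (σ.c.getD (σ.t - 1 - i) 0, σ.d.getD (σ.t - 1 - i) 0))

/-- The pair represented by `π` is bounded below by `T` : for every dual pair of chains in
it, `T ≤ OBRSK(negative part of the chain pair)^up`. -/
def PairBoundedT (π : ArrayPair) (T : Finset (ℕ × ℕ)) : Prop :=
  ∀ σ : ArrayPair, DualChainIn π σ → msLE ↑T.val (OBRSK σ.negPart).up

/-- The pair represented by `π` is bounded above by `W` : for every dual pair of chains in
it, `OBRSK(positive part of the chain pair)^down ≤ W`. -/
def PairBoundedW (π : ArrayPair) (W : Finset (ℕ × ℕ)) : Prop :=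
  ∀ σ : ArrayPair, DualChainIn π σ → msLE (OBRSK σ.posPart).down ↑W.val

/-- The pair represented by `π` is bounded by `T, W`. -/
def PairBounded (π : ArrayPair) (T W : Finset (ℕ × ℕ)) : Prop :=
  PairBoundedT π T ∧ PairBoundedW π W

namespace Bitab

/-- The bitableau is bounded below by `T` : if its top row is negative (i.e. the negative
part is nonempty), then `T₍₁₎ − T₍₂₎ ≤ P₁⁻ − Q₁⁻`. -/
def BoundedByT (B : Bitab) (T : Finset (ℕ × ℕ)) : Prop :=
  diffLT (B.P.getD 0 []) (B.Q.getD 0 []) [] [] →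
    msLE ↑T.val ↑((B.P.getD 0 []).zip (B.Q.getD 0 []))

/-- The bitableau is bounded above by `W` : if its bottom row is positive (i.e. the
positive part is nonempty), then `P⁺_s − Q⁺_s ≤ W₍₁₎ − W₍₂₎`. -/
def BoundedByW (B : Bitab) (W : Finset (ℕ × ℕ)) : Prop :=
  diffLT [] [] (B.P.getD (B.P.length - 1) []) (B.Q.getD (B.Q.length - 1) []) →
    msLE ↑((B.P.getD (B.P.length - 1) []).zip (B.Q.getD (B.Q.length - 1) [])) ↑W.val

/-- The bitableau is bounded by `T, W`. -/
def BoundedBy (B : Bitab) (T W : Finset (ℕ × ℕ)) : Prop :=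
  B.BoundedByT T ∧ B.BoundedByW W

end Bitab

/-- A negative subset of ℕ². -/
def NegSubset (T : Finset (ℕ × ℕ)) : Prop := ∀ p ∈ T, p.1 < p.2

/-- A positive subset of ℕ². -/
def PosSubset (W : Finset (ℕ × ℕ)) : Prop := ∀ p ∈ W, p.2 < p.1

/-- The coordinate projections `T₍₁₎`, `T₍₂₎` have no repeated elements. -/
def ProjNodup (T : Finset (ℕ × ℕ)) : Prop :=
  (T.val.map Prod.fst).Nodup ∧ (T.val.map Prod.snd).Nodup

/-! ### The orthogonal Grassmannian combinatorics -/

/-- `Ĩ(d)` : the set of `d`-element subsets of `{1, …, 2d}` containing exactly one of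
`k, k* = 2d+1−k` for every `k`, with an even number of elements exceeding `d`. -/
def Itilde (d : ℕ) : Set (Finset ℕ) :=
  {v | v ⊆ Finset.Icc 1 (2 * d) ∧ v.card = d ∧
    (∀ k ∈ Finset.Icc 1 (2 * d), (k ∈ v ↔ (2 * d + 1 - k) ∉ v)) ∧
    Even ((v.filter (fun x => d < x)).card)}

/-- `OR(β) = {(r,c) : r ∈ β̄, c ∈ β, r < c*}`. -/
def ORset (d : ℕ) (β : Finset ℕ) : Set (ℕ × ℕ) :=
  {p | p.1 ∈ Finset.Icc 1 (2 * d) ∧ p.1 ∉ β ∧ p.2 ∈ β ∧ p.1 < 2 * d + 1 - p.2}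

/-- `U^# := {(c*, r*) : (r,c) ∈ U}` (with multiplicities). -/
def hashMS (d : ℕ) (U : Multiset (ℕ × ℕ)) : Multiset (ℕ × ℕ) :=
  U.map (fun p => (2 * d + 1 - p.2, 2 * d + 1 - p.1))

/-- `ψ(π)` is a pair of skew-symmetric multisets on `β̄×β`, i.e. of the form `{U, U^#}`
with `U` a multiset on `OR(β)`. -/
def ArrayPair.OnBB (d : ℕ) (β : Finset ℕ) (π : ArrayPair) : Prop :=
  (∀ x ∈ π.a.zip π.b, x ∈ ORset d β) ∧
  (↑(π.d.zip π.c) : Multiset (ℕ × ℕ)) = hashMS d ↑(π.a.zip π.b)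

/-- A skew-symmetric notched bitableau is on `β̄×β` : all entries of `P` are in `β̄`, all
entries of `Q` are in `β`, and every entry plus its dual equals `2d+1`. -/
def Bitab.OnBB (d : ℕ) (β : Finset ℕ) (B : Bitab) : Prop :=
  (∀ r ∈ B.P, ∀ x ∈ r, x ∈ Finset.Icc 1 (2 * d) ∧ x ∉ β) ∧
  (∀ r ∈ B.Q, ∀ x ∈ r, x ∈ β) ∧
  (∀ p ∈ B.entryDual, p.1 + p.2 = 2 * d + 1)

/-- The partial order on `Ĩ(d)` : `v ≤ w` iff the `i`-th smallest element of `v` is `≤`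
the `i`-th smallest element of `w` for every `i`. -/
def IleD (v w : Finset ℕ) : Prop :=
  v.card = w.card ∧
  ∀ i < v.card, (v.sort (· ≤ ·)).getD i 0 ≤ (w.sort (· ≤ ·)).getD i 0

def IltD (v w : Finset ℕ) : Prop := IleD v w ∧ v ≠ w

/-- `I_β(Skew-symm)` : pairs `(R, S)` with `R ⊆ β̄`, `S ⊆ β`, `|R| = |S|` even, and
`r_i + s_{2l+1−i} = 2d+1` for all `i`. -/
def IbSS (d : ℕ) (β : Finset ℕ) : Set (Finset ℕ × Finset ℕ) :=
  {RS | RS.1 ⊆ Finset.Icc 1 (2 * d) \ β ∧ RS.2 ⊆ β ∧ RS.1.card = RS.2.card ∧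
    Even RS.1.card ∧
    ∀ i < RS.1.card,
      (RS.1.sort (· ≤ ·)).getD i 0 + (RS.2.sort (· ≤ ·)).getD (RS.1.card - 1 - i) 0
        = 2 * d + 1}

/-- `θ_i := P_i ∪̇ (β ∖ Q_i)`. -/
def rowTheta (β : Finset ℕ) (p q : List ℕ) : Finset ℕ := p.toFinset ∪ (β \ q.toFinset)

/-- An extended `β`-chain, listed with strictly increasing rows and strictly decreasing
columns. -/
def IsExtChain (ch : List (ℕ × ℕ)) : Prop :=
  List.Chain' (fun x y => x.1 < y.1 ∧ y.2 < x.2) ch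

/-- The negative part `C⁻` of an extended chain: the elements `(r,c)` with `r < c`. -/
def chainNeg (ch : List (ℕ × ℕ)) : List (ℕ × ℕ) := ch.filter (fun p => decide (p.1 < p.2))

/-- The positive part `C⁺` of an extended chain: the elements `(r,c)` with `r > c`. -/
def chainPos (ch : List (ℕ × ℕ)) : List (ℕ × ℕ) := ch.filter (fun p => decide (p.2 < p.1))

/-- `ψ⁻¹({C, C^#})` : the pair of arrays corresponding to the dual pair of chains
`{C, C^#}` determined by an extended `β`-chain `C`. -/
def chainToPair (d : ℕ) (ch : List (ℕ × ℕ)) : ArrayPair :=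
  ⟨ch.map Prod.fst, ch.map Prod.snd,
   (ch.map (fun p => 2 * d + 1 - p.1)).reverse,
   (ch.map (fun p => 2 * d + 1 - p.2)).reverse⟩

/-- The terminating row number `K` of the bounded insertion performed at step `i`
(1-indexed) of the OBRSK algorithm. -/
def stepK (π : ArrayPair) (i : ℕ) : ℕ :=
  ((insertP (π.quads.getD (i - 1) (0, 0, 0, 0)).2.1 (stepState π (i - 1)).1
      (π.quads.getD (i - 1) (0, 0, 0, 0)).1).2).length

end OBRSKPaper

open OBRSKPaper

/-!
A row `(P_i, Q_i)` of a skew-symmetric bitableau on `β̄ × β` is recovered from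
`θ_i = P_i ∪̇ (β ∖ Q_i)` as `P_i = θ_i ∖ β` and `Q_i = β ∖ θ_i`, listed increasingly. The duality
`x + dual(x) = 2d+1` says that the involution `x ↦ 2d+1-x` maps `θ_i ∖ β` onto `β ∖ θ_i`; together
with the evenness of the row length this is exactly what makes `θ_i` an element of `Ĩ(d)`, and
conversely every `θ ∈ Ĩ(d)` gives such a row.

The order conditions are all translated by counting. For sets of the same size, `v ≤ w` holds iff
`#{x ∈ w | x ≤ z} ≤ #{x ∈ v | x ≤ z}` for every `z`, while the multiset `P_i − Q_i` has
`#{x ∈ P_i | x ≤ z} − #{x ∈ Q_i | x ≤ z} = #{x ∈ θ_i | x ≤ z} − #{x ∈ β | x ≤ z}` elements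
`≤ z` (up to the common infinite part). Hence `P_i − Q_i ≤ P_j − Q_j` iff `θ_i ≤ θ_j`, the row is
negative or positive according as `θ_i < β` or `θ_i > β`, and the bounds by `T_α` and `W_γ`
become `α ≤ θ_1` and `θ_r ≤ γ`.
-/

namespace List

theorem lt_length_filter_le_iff {α : Type*} [LinearOrder α] {l : List α}
    (hl : l.Pairwise (· ≤ ·)) {i : ℕ} (hi : i < l.length) (z : α) :
    i < (l.filter (· ≤ z)).length ↔ l[i] ≤ z := by
  induction l generalizing i with
  | nil => simp at hi
  | cons x t ih =>
    rw [pairwise_cons] at hl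
    by_cases hx : x ≤ z
    · cases i with
      | zero => simp [hx]
      | succ j => simpa [filter_cons, hx] using ih hl.2 (by simpa using hi)
    · have hgt : ∀ y ∈ x :: t, z < y := by
        simp only [mem_cons, forall_eq_or_imp]
        exact ⟨not_le.1 hx, fun y hy => (not_le.1 hx).trans_le (hl.1 y hy)⟩
      have hnil : (x :: t).filter (· ≤ z) = [] :=
        filter_eq_nil_iff.2 fun y hy => by simpa using hgt y hy
      simpa [hnil] using hgt _ (getElem_mem hi)

theorem apply_eq_apply_of_mem_zip {α β : Type*} {f : α → β} {P Q : List α}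
    (h : P.map f = Q.map f) {a b : α} (hab : (a, b) ∈ P.zip Q) : f a = f b := by
  obtain ⟨i, hi, he⟩ := mem_iff_getElem.1 hab
  simp only [length_zip, getElem_zip, Prod.mk.injEq] at hi he
  obtain ⟨rfl, rfl⟩ := he
  rw [Nat.lt_min] at hi
  simpa [getElem?_eq_getElem hi.1, getElem?_eq_getElem hi.2] using congrArg (·[i]?) h

theorem mem_zip_map_self {α β : Type*} {f : α → β} {l : List α} {pr : α × β}
    (h : pr ∈ l.zip (l.map f)) : pr.1 ∈ l ∧ pr.2 = f pr.1 := by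
  induction l with
  | nil => simp at h
  | cons x t ih =>
    rcases mem_cons.1 h with rfl | h
    · simp
    · exact ⟨mem_cons_of_mem _ (ih h).1, (ih h).2⟩

theorem image_sub_toFinset_of_zip {l₁ l₂ : List ℕ} {n : ℕ} (hlen : l₁.length = l₂.length)
    (hsum : ∀ pr ∈ l₁.zip l₂, pr.1 + pr.2 = n) : l₁.toFinset.image (n - ·) = l₂.toFinset := by
  have h₁ : ∀ x, x ∈ l₁ ↔ ∃ pr ∈ l₁.zip l₂, pr.1 = x := fun x => by
    conv_lhs => rw [← map_fst_zip hlen.le]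
    exact mem_map
  have h₂ : ∀ y, y ∈ l₂ ↔ ∃ pr ∈ l₁.zip l₂, pr.2 = y := fun y => by
    conv_lhs => rw [← map_snd_zip hlen.ge]
    exact mem_map
  ext y
  simp only [Finset.mem_image, mem_toFinset, h₁, h₂]
  constructor
  · rintro ⟨_, ⟨pr, hpr, rfl⟩, rfl⟩
    exact ⟨pr, hpr, by have := hsum pr hpr; omega⟩
  · rintro ⟨pr, hpr, rfl⟩
    exact ⟨pr.1, ⟨pr, hpr, rfl⟩, by have := hsum pr hpr; omega⟩

end List

theorem Finset.card_filter_sdiff_add_card_filter_inter {α : Type*} [DecidableEq α]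
    (p : α → Prop) [DecidablePred p] (s t : Finset α) :
    ((s \ t).filter p).card + ((s ∩ t).filter p).card = (s.filter p).card := by
  rw [← card_union_of_disjoint
      (disjoint_filter_filter (sdiff_disjoint.mono_right inter_subset_right)),
    ← filter_union, sdiff_union_inter]

namespace OBRSKPaper

section Counting

def cardLE (s : Finset ℕ) (z : ℕ) : ℕ := (s.filter (· ≤ z)).card

theorem cardLE_sdiff_sub_cardLE_sdiff (θ β : Finset ℕ) (z : ℕ) :
    (cardLE (θ \ β) z : ℤ) - cardLE (β \ θ) z = (cardLE θ z : ℤ) - cardLE β z := by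
  have hθ := Finset.card_filter_sdiff_add_card_filter_inter (· ≤ z) θ β
  have hβ := Finset.card_filter_sdiff_add_card_filter_inter (· ≤ z) β θ
  rw [Finset.inter_comm] at hβ
  simp only [cardLE]
  omega

theorem cardLE_eq_length_filter_sort (s : Finset ℕ) (z : ℕ) :
    cardLE s z = (s.sort.filter (· ≤ z)).length := by
  rw [cardLE, Finset.card_def, Finset.filter_val, ← Finset.sort_eq s (· ≤ ·), Multiset.filter_coe,
    Multiset.coe_card]

theorem cntLE_sort (s : Finset ℕ) (z : ℕ) : cntLE s.sort z = cardLE s z := by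
  rw [cntLE, cardLE_eq_length_filter_sort]

theorem lt_cardLE_iff {s : Finset ℕ} {i : ℕ} (hi : i < s.card) (z : ℕ) :
    i < cardLE s z ↔ s.sort[i]'(by simpa using hi) ≤ z := by
  rw [cardLE_eq_length_filter_sort]
  exact List.lt_length_filter_le_iff (Finset.pairwise_sort s _) _ z

/-- An index with `v_i > w_i` makes `z = w_i` violate the counting inequality, and a `z` violating
it gives `v_i > z ≥ w_i` for `i = #{x ∈ v | x ≤ z}`. -/
theorem ileD_iff_cardLE {v w : Finset ℕ} (h : v.card = w.card) :
    IleD v w ↔ ∀ z, cardLE w z ≤ cardLE v z := by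
  have hlen : ∀ {i}, i < v.card → i < v.sort.length ∧ i < w.sort.length := by simp [h]
  simp only [IleD, h, true_and]
  constructor
  · intro hle z
    by_contra! hlt
    have hiw : cardLE v z < w.card := hlt.trans_le (Finset.card_filter_le _ _)
    have hiv : cardLE v z < v.card := h ▸ hiw
    have hw := (lt_cardLE_iff hiw z).1 hlt
    have hv := (lt_cardLE_iff hiv z).not.1 (lt_irrefl _)
    have := hle _ hiw
    rw [List.getD_eq_getElem _ _ (hlen hiv).1, List.getD_eq_getElem _ _ (hlen hiv).2] at this
    omega
  · intro hcard i hi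
    rw [List.getD_eq_getElem _ _ (hlen (h ▸ hi)).1, List.getD_eq_getElem _ _ (hlen (h ▸ hi)).2]
    by_contra! hlt
    have hw := (lt_cardLE_iff hi _).2 le_rfl
    have hv := (lt_cardLE_iff (h ▸ hi) _).not.2 (not_le.2 hlt)
    have := hcard (w.sort[i]'(hlen (h ▸ hi)).2)
    omega

theorem IleD.trans {u v w : Finset ℕ} (h₁ : IleD u v) (h₂ : IleD v w) : IleD u w :=
  ⟨h₁.1.trans h₂.1, fun i hi => (h₁.2 i hi).trans (h₂.2 i (h₁.1 ▸ hi))⟩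

theorem IleD.antisymm {v w : Finset ℕ} (h₁ : IleD v w) (h₂ : IleD w v) : v = w := by
  have hsort : v.sort = w.sort := by
    refine List.ext_getElem (by simp [h₁.1]) fun i hv hw => ?_
    have h₁i := h₁.2 i (by simpa using hv)
    have h₂i := h₂.2 i (by simpa [← h₁.1] using hv)
    rw [List.getD_eq_getElem _ _ hv, List.getD_eq_getElem _ _ hw] at h₁i h₂i
    omega
  simpa using congrArg List.toFinset hsort

theorem iltD_iff_ileD_and_not_ileD {v w : Finset ℕ} : IltD v w ↔ IleD v w ∧ ¬ IleD w v :=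
  and_congr_right fun h => ⟨fun hne h' => hne (h.antisymm h'), fun h' he => h' (he ▸ h)⟩

end Counting

section Itilde

variable {d : ℕ} {β θ : Finset ℕ}

theorem star_injOn (d : ℕ) : Set.InjOn (2 * d + 1 - ·) ↑(Finset.Icc 1 (2 * d)) := by
  intro x hx y hy h
  simp only [Finset.coe_Icc, Set.mem_Icc] at hx hy h
  omega

theorem card_eq_of_mem_itilde {θ' : Finset ℕ} (h : θ ∈ Itilde d) (h' : θ' ∈ Itilde d) :
    θ.card = θ'.card :=
  h.2.1.trans h'.2.1.symm

theorem star_mem_itilde_iff (hβ : β ∈ Itilde d) {k : ℕ} (hk : k ∈ Finset.Icc 1 (2 * d)) :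
    2 * d + 1 - k ∈ β ↔ k ∉ β := by
  have := hβ.2.2.1 k hk
  tauto

theorem image_star_sdiff (hβ : β ∈ Itilde d) (hθ : θ ∈ Itilde d) :
    (θ \ β).image (2 * d + 1 - ·) = β \ θ := by
  ext y
  simp only [Finset.mem_image, Finset.mem_sdiff]
  constructor
  · rintro ⟨x, ⟨hxθ, hxβ⟩, rfl⟩
    exact ⟨(star_mem_itilde_iff hβ (hθ.1 hxθ)).2 hxβ,
      fun h => (star_mem_itilde_iff hθ (hθ.1 hxθ)).1 h hxθ⟩
  · rintro ⟨hyβ, hyθ⟩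
    have hy := Finset.mem_Icc.1 (hβ.1 hyβ)
    exact ⟨2 * d + 1 - y, ⟨(star_mem_itilde_iff hθ (hβ.1 hyβ)).2 hyθ,
      fun h => (star_mem_itilde_iff hβ (hβ.1 hyβ)).1 h hyβ⟩, by omega⟩

theorem card_sdiff_eq_of_image_star (hsub : θ \ β ⊆ Finset.Icc 1 (2 * d))
    (hstar : (θ \ β).image (2 * d + 1 - ·) = β \ θ) : (β \ θ).card = (θ \ β).card := by
  rw [← hstar, Finset.card_image_of_injOn ((star_injOn d).mono hsub)]

/-- The star `x ↦ 2d+1-x` exchanges the elements `≤ d` and `> d` of `{1,…,2d}`, so when it maps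
`θ ∖ β` onto `β ∖ θ` the numbers of elements `> d` of `θ` and of `β` differ by `|θ ∖ β|`
modulo `2`. -/
theorem even_card_sdiff_iff (hsub : θ \ β ⊆ Finset.Icc 1 (2 * d))
    (hstar : (θ \ β).image (2 * d + 1 - ·) = β \ θ) :
    Even (θ \ β).card ↔
      (Even (θ.filter (fun x => d < x)).card ↔ Even (β.filter (fun x => d < x)).card) := by
  have hθ := Finset.card_filter_sdiff_add_card_filter_inter (fun x => d < x) θ β
  have hβ := Finset.card_filter_sdiff_add_card_filter_inter (fun x => d < x) β θ
  have hswap : ((β \ θ).filter (fun x => d < x)).card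
      = ((θ \ β).filter (fun x => ¬ d < x)).card := by
    rw [← hstar, Finset.filter_image, Finset.card_image_of_injOn
      ((star_injOn d).mono ((Finset.filter_subset _ _).trans hsub))]
    congr 1
    refine Finset.filter_congr fun x hx => ?_
    have := Finset.mem_Icc.1 (hsub hx)
    omega
  have hsplit := Finset.card_filter_add_card_filter_not (s := θ \ β) (fun x => d < x)
  rw [Finset.inter_comm] at hβ
  rw [← Nat.even_add, show (θ.filter (fun x => d < x)).card + (β.filter (fun x => d < x)).card
    = (θ \ β).card + 2 * ((θ ∩ β).filter (fun x => d < x)).card by omega]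
  simp [Nat.even_add]

theorem even_card_sdiff_of_mem_itilde (hβ : β ∈ Itilde d) (hθ : θ ∈ Itilde d) :
    Even (θ \ β).card :=
  (even_card_sdiff_iff (fun _ hx => hθ.1 (Finset.mem_sdiff.1 hx).1)
    (image_star_sdiff hβ hθ)).2 (iff_of_true hθ.2.2.2 hβ.2.2.2)

theorem card_sdiff_comm_of_mem_itilde (hβ : β ∈ Itilde d) (hθ : θ ∈ Itilde d) :
    (β \ θ).card = (θ \ β).card :=
  card_sdiff_eq_of_image_star (fun _ hx => hθ.1 (Finset.mem_sdiff.1 hx).1)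
    (image_star_sdiff hβ hθ)

theorem mem_itilde_of_image_star_sdiff (hβ : β ∈ Itilde d)
    (hsub : θ \ β ⊆ Finset.Icc 1 (2 * d)) (hstar : (θ \ β).image (2 * d + 1 - ·) = β \ θ)
    (heven : Even (θ \ β).card) : θ ∈ Itilde d := by
  refine ⟨fun x hx => ?_, ?_, fun k hk => ?_,
    ((even_card_sdiff_iff hsub hstar).1 heven).2 hβ.2.2.2⟩
  · by_cases hxβ : x ∈ β
    · exact hβ.1 hxβ
    · exact hsub (Finset.mem_sdiff.2 ⟨hx, hxβ⟩)
  · have hθ := Finset.card_sdiff_add_card_inter θ β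
    have hβc := Finset.card_sdiff_add_card_inter β θ
    rw [Finset.inter_comm, card_sdiff_eq_of_image_star hsub hstar, hβ.2.1] at hβc
    omega
  · have hmem : ∀ y ∈ Finset.Icc 1 (2 * d), y ∈ β \ θ ↔ 2 * d + 1 - y ∈ θ \ β := by
      intro y hy
      rw [← hstar, Finset.mem_image]
      have := Finset.mem_Icc.1 hy
      constructor
      · rintro ⟨x, hx, rfl⟩
        have := Finset.mem_Icc.1 (hsub hx)
        rwa [show 2 * d + 1 - (2 * d + 1 - x) = x by omega]
      · exact fun h => ⟨_, h, by omega⟩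
    have hk' := Finset.mem_Icc.1 hk
    have h₁ := hmem k hk
    have h₂ := hmem (2 * d + 1 - k) (Finset.mem_Icc.2 (by omega))
    have hβk := star_mem_itilde_iff hβ hk
    rw [show 2 * d + 1 - (2 * d + 1 - k) = k by omega] at h₂
    simp only [Finset.mem_sdiff] at h₁ h₂
    tauto

theorem sort_reverse_eq_map_sort {D E : Finset ℕ} (hsub : D ⊆ Finset.Icc 1 (2 * d))
    (hstar : D.image (2 * d + 1 - ·) = E) : E.sort.reverse = D.sort.map (2 * d + 1 - ·) := by
  rw [List.SortedLT.eq_reverse_of_mem_iff_of_sortedGT (l₂ := D.sort.map (2 * d + 1 - ·)) ?_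
    (Finset.sortedLT_sort E) ?_, List.reverse_reverse]
  · simp [← hstar]
  · refine List.Pairwise.sortedGT (List.pairwise_map.2 ?_)
    refine (Finset.sortedLT_sort D).pairwise.imp_of_mem fun ha hb hab => ?_
    have := Finset.mem_Icc.1 (hsub ((Finset.mem_sort _).1 hb))
    omega

end Itilde

section Rows

def rowP (β θ : Finset ℕ) : List ℕ := (θ \ β).sort

def rowQ (β θ : Finset ℕ) : List ℕ := (β \ θ).sort

variable {β θ θ' : Finset ℕ}

@[simp] theorem rowP_self (β : Finset ℕ) : rowP β β = [] := by simp [rowP]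

@[simp] theorem rowQ_self (β : Finset ℕ) : rowQ β β = [] := by simp [rowQ]

@[simp] theorem mem_rowP {x : ℕ} : x ∈ rowP β θ ↔ x ∈ θ \ β := Finset.mem_sort _

@[simp] theorem mem_rowQ {x : ℕ} : x ∈ rowQ β θ ↔ x ∈ β \ θ := Finset.mem_sort _

theorem rowTheta_rowP_rowQ (β θ : Finset ℕ) : rowTheta β (rowP β θ) (rowQ β θ) = θ := by
  ext x
  simp only [rowTheta, rowP, rowQ, Finset.sort_toFinset, Finset.mem_union, Finset.mem_sdiff]
  tauto

theorem length_rowP_eq_length_rowQ (h : θ.card = β.card) :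
    (rowP β θ).length = (rowQ β θ).length := by
  simp [rowP, rowQ, Finset.card_sdiff_comm h]

theorem cntLE_rowP_sub_cntLE_rowQ (β θ : Finset ℕ) (z : ℕ) :
    cntLE (rowP β θ) z - cntLE (rowQ β θ) z = (cardLE θ z : ℤ) - cardLE β z := by
  rw [rowP, rowQ, cntLE_sort, cntLE_sort, cardLE_sdiff_sub_cardLE_sdiff]

theorem diffLE_rows_iff (h : θ.card = θ'.card) :
    diffLE (rowP β θ) (rowQ β θ) (rowP β θ') (rowQ β θ') ↔ IleD θ θ' := by
  rw [ileD_iff_cardLE h, diffLE]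
  refine forall_congr' fun z => ?_
  rw [cntLE_rowP_sub_cntLE_rowQ, cntLE_rowP_sub_cntLE_rowQ]
  omega

theorem diffLT_rows_iff (h : θ.card = θ'.card) :
    diffLT (rowP β θ) (rowQ β θ) (rowP β θ') (rowQ β θ') ↔ IltD θ θ' := by
  rw [diffLT, diffLE_rows_iff h, diffLE_rows_iff h.symm, iltD_iff_ileD_and_not_ileD]

theorem diffLT_rows_nil_iff (h : θ.card = β.card) :
    diffLT (rowP β θ) (rowQ β θ) [] [] ↔ IltD θ β := by
  simpa using diffLT_rows_iff (β := β) h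

theorem diffLT_nil_rows_iff (h : β.card = θ.card) :
    diffLT [] [] (rowP β θ) (rowQ β θ) ↔ IltD β θ := by
  simpa using diffLT_rows_iff (β := β) h

theorem card_filter_fst_le {S : Multiset (ℕ × ℕ)} {A : Finset ℕ} (h : S.map Prod.fst = A.val)
    (z : ℕ) : (S.filter (fun p => p.1 ≤ z)).card = cardLE A z := by
  rw [cardLE, Finset.card_def, Finset.filter_val, ← h, Multiset.filter_map, Multiset.card_map]
  rfl

theorem card_filter_snd_le {S : Multiset (ℕ × ℕ)} {A : Finset ℕ} (h : S.map Prod.snd = A.val)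
    (z : ℕ) : (S.filter (fun p => p.2 ≤ z)).card = cardLE A z := by
  rw [cardLE, Finset.card_def, Finset.filter_val, ← h, Multiset.filter_map, Multiset.card_map]
  rfl

theorem msLE_iff_cardLE {S T : Multiset (ℕ × ℕ)} {A B A' B' : Finset ℕ}
    (hS₁ : S.map Prod.fst = A.val) (hS₂ : S.map Prod.snd = B.val)
    (hT₁ : T.map Prod.fst = A'.val) (hT₂ : T.map Prod.snd = B'.val) :
    msLE S T ↔ ∀ z, (cardLE A' z : ℤ) - cardLE B' z ≤ (cardLE A z : ℤ) - cardLE B z := by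
  simp only [msLE, card_filter_fst_le hS₁, card_filter_snd_le hS₂, card_filter_fst_le hT₁,
    card_filter_snd_le hT₂]

theorem map_fst_zip_rows (h : θ.card = β.card) :
    (((rowP β θ).zip (rowQ β θ) : List (ℕ × ℕ)) : Multiset (ℕ × ℕ)).map Prod.fst
      = (θ \ β).val := by
  rw [Multiset.map_coe, List.map_fst_zip (length_rowP_eq_length_rowQ h).le, rowP,
    Finset.sort_eq]

theorem map_snd_zip_rows (h : θ.card = β.card) :
    (((rowP β θ).zip (rowQ β θ) : List (ℕ × ℕ)) : Multiset (ℕ × ℕ)).map Prod.snd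
      = (β \ θ).val := by
  rw [Multiset.map_coe, List.map_snd_zip (length_rowP_eq_length_rowQ h).ge, rowQ,
    Finset.sort_eq]

theorem msLE_rows_iff {α : Finset ℕ} {T : Finset (ℕ × ℕ)}
    (hT₁ : T.val.map Prod.fst = (α \ β).val) (hT₂ : T.val.map Prod.snd = (β \ α).val)
    (hα : α.card = β.card) (hθ : θ.card = β.card) :
    msLE ↑T.val ↑((rowP β θ).zip (rowQ β θ)) ↔ IleD α θ := by
  rw [msLE_iff_cardLE hT₁ hT₂ (map_fst_zip_rows hθ) (map_snd_zip_rows hθ),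
    ileD_iff_cardLE (hα.trans hθ.symm)]
  refine forall_congr' fun z => ?_
  rw [cardLE_sdiff_sub_cardLE_sdiff, cardLE_sdiff_sub_cardLE_sdiff]
  omega

theorem rows_msLE_iff {γ : Finset ℕ} {W : Finset (ℕ × ℕ)}
    (hW₁ : W.val.map Prod.fst = (γ \ β).val) (hW₂ : W.val.map Prod.snd = (β \ γ).val)
    (hγ : γ.card = β.card) (hθ : θ.card = β.card) :
    msLE ↑((rowP β θ).zip (rowQ β θ)) ↑W.val ↔ IleD θ γ := by
  rw [msLE_iff_cardLE (map_fst_zip_rows hθ) (map_snd_zip_rows hθ) hW₁ hW₂,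
    ileD_iff_cardLE (hθ.trans hγ.symm)]
  refine forall_congr' fun z => ?_
  rw [cardLE_sdiff_sub_cardLE_sdiff, cardLE_sdiff_sub_cardLE_sdiff]
  omega

end Rows

section RowsOfBitableaux

variable {d : ℕ} {β : Finset ℕ} {p q : List ℕ}

theorem rowTheta_sdiff (hp : ∀ x ∈ p, x ∉ β) : rowTheta β p q \ β = p.toFinset := by
  ext x
  simp only [rowTheta, Finset.mem_sdiff, Finset.mem_union, List.mem_toFinset]
  have := hp x
  tauto

theorem sdiff_rowTheta (hp : ∀ x ∈ p, x ∉ β) (hq : ∀ y ∈ q, y ∈ β) :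
    β \ rowTheta β p q = q.toFinset := by
  ext x
  simp only [rowTheta, Finset.mem_sdiff, Finset.mem_union, List.mem_toFinset]
  have := hp x
  have := hq x
  tauto

/-- A row `(P_i, Q_i)` of a skew-symmetric bitableau on `β̄ × β`; `image_star` is what the
duality `x + dual(x) = 2d+1` says about a single row. -/
structure IsRowOn (d : ℕ) (β : Finset ℕ) (p q : List ℕ) : Prop where
  sorted_left : p.Pairwise (· < ·)
  sorted_right : q.Pairwise (· < ·)
  left_mem : ∀ x ∈ p, x ∈ Finset.Icc 1 (2 * d) ∧ x ∉ β
  right_mem : ∀ y ∈ q, y ∈ β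
  image_star : p.toFinset.image (2 * d + 1 - ·) = q.toFinset
  even_length : Even p.length

namespace IsRowOn

theorem not_mem_of_mem_left (h : IsRowOn d β p q) : ∀ x ∈ p, x ∉ β :=
  fun x hx => (h.left_mem x hx).2

theorem rowP_rowTheta (h : IsRowOn d β p q) : rowP β (rowTheta β p q) = p := by
  rw [rowP, rowTheta_sdiff h.not_mem_of_mem_left]
  exact (List.toFinset_sort _ h.sorted_left.nodup).2 (h.sorted_left.imp le_of_lt)

theorem rowQ_rowTheta (h : IsRowOn d β p q) : rowQ β (rowTheta β p q) = q := by
  rw [rowQ, sdiff_rowTheta h.not_mem_of_mem_left h.right_mem]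
  exact (List.toFinset_sort _ h.sorted_right.nodup).2 (h.sorted_right.imp le_of_lt)

theorem rowTheta_mem_itilde (h : IsRowOn d β p q) (hβ : β ∈ Itilde d) :
    rowTheta β p q ∈ Itilde d := by
  have hP := rowTheta_sdiff (q := q) h.not_mem_of_mem_left
  refine mem_itilde_of_image_star_sdiff hβ ?_ ?_ ?_
  · rw [hP]
    exact fun x hx => (h.left_mem x (List.mem_toFinset.1 hx)).1
  · rw [hP, sdiff_rowTheta h.not_mem_of_mem_left h.right_mem, h.image_star]
  · rw [hP, List.toFinset_card_of_nodup h.sorted_left.nodup]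
    exact h.even_length

end IsRowOn

theorem Bitab.isRowOn_of_mem_zip {B : Bitab} (hB : B.SkewSymm) (hOn : B.OnBB d β)
    (hpq : (p, q) ∈ B.P.zip B.Q) : IsRowOn d β p q := by
  obtain ⟨hp, hq⟩ := List.of_mem_zip hpq
  have hlen : p.length = q.length := List.apply_eq_apply_of_mem_zip hB.1.1 hpq
  refine ⟨hB.1.2.1.1 p hp, hB.1.2.1.2 q hq, hOn.1 p hp, hOn.2.1 q hq, ?_, hB.2.1 p hp⟩
  rw [← List.toFinset_reverse (l := q)]
  refine List.image_sub_toFinset_of_zip (by simpa using hlen) fun pr hpr => hOn.2.2 pr ?_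
  exact List.mem_append_left _ (List.mem_flatten.2 ⟨_, List.mem_map.2 ⟨(p, q), hpq, rfl⟩, hpr⟩)

end RowsOfBitableaux

namespace Bitab

def thetas (β : Finset ℕ) (B : Bitab) : List (Finset ℕ) :=
  (B.P.zip B.Q).map fun pq => rowTheta β pq.1 pq.2

def ofThetas (β : Finset ℕ) (L : List (Finset ℕ)) : Bitab :=
  ⟨L.map (rowP β), L.map (rowQ β)⟩

variable {d : ℕ} {β : Finset ℕ} {L : List (Finset ℕ)}

theorem thetas_ofThetas (L : List (Finset ℕ)) : (ofThetas β L).thetas β = L := by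
  simp [thetas, ofThetas, List.zip_map', Function.comp_def, rowTheta_rowP_rowQ]

theorem ofThetas_thetas {B : Bitab} (hB : B.SkewSymm) (hOn : B.OnBB d β) :
    ofThetas β (B.thetas β) = B := by
  have hlen : B.P.length = B.Q.length := by simpa using congrArg List.length hB.1.1
  have hrow : ∀ pq ∈ B.P.zip B.Q, IsRowOn d β pq.1 pq.2 := fun pq h =>
    isRowOn_of_mem_zip hB hOn h
  obtain ⟨P, Q⟩ := B
  dsimp only at hlen hrow
  simp only [ofThetas, thetas, List.map_map, Bitab.mk.injEq]
  constructor
  · conv_rhs => rw [← List.map_fst_zip hlen.le]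
    exact List.map_congr_left fun pq h => (hrow pq h).rowP_rowTheta
  · conv_rhs => rw [← List.map_snd_zip hlen.ge]
    exact List.map_congr_left fun pq h => (hrow pq h).rowQ_rowTheta

theorem thetas_mem_itilde (hβ : β ∈ Itilde d) {B : Bitab} (hB : B.SkewSymm)
    (hOn : B.OnBB d β) : ∀ θ ∈ B.thetas β, θ ∈ Itilde d := by
  simp only [thetas, List.mem_map]
  rintro _ ⟨pq, h, rfl⟩
  exact (isRowOn_of_mem_zip hB hOn h).rowTheta_mem_itilde hβ

@[simp] theorem length_ofThetas_P : (ofThetas β L).P.length = L.length := by simp [ofThetas]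

@[simp] theorem length_ofThetas_Q : (ofThetas β L).Q.length = L.length := by simp [ofThetas]

theorem ofThetas_P_getD (L : List (Finset ℕ)) (i : ℕ) :
    (ofThetas β L).P.getD i [] = rowP β (L.getD i β) := by
  rw [ofThetas, ← rowP_self β, List.getD_map]

theorem ofThetas_Q_getD (L : List (Finset ℕ)) (i : ℕ) :
    (ofThetas β L).Q.getD i [] = rowQ β (L.getD i β) := by
  rw [ofThetas, ← rowQ_self β, List.getD_map]

theorem getD_mem_itilde (hβ : β ∈ Itilde d) (hL : ∀ θ ∈ L, θ ∈ Itilde d) (i : ℕ) :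
    L.getD i β ∈ Itilde d := by
  rcases lt_or_ge i L.length with hi | hi
  · rw [List.getD_eq_getElem _ _ hi]
    exact hL _ (List.getElem_mem hi)
  · rwa [List.getD_eq_default _ _ hi]

theorem ofThetas_entryDual (hβ : β ∈ Itilde d) (hL : ∀ θ ∈ L, θ ∈ Itilde d) :
    ∀ pr ∈ (ofThetas β L).entryDual, pr.1 ∈ Finset.Icc 1 (2 * d) ∧ pr.2 = 2 * d + 1 - pr.1 := by
  simp only [entryDual, ofThetas, List.zip_map', List.map_map, Function.comp_def,
    List.mem_append, List.mem_flatten, List.mem_map]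
  rintro pr (⟨_, ⟨θ, hθ, rfl⟩, hpr⟩ | ⟨_, ⟨θ, hθ, rfl⟩, hpr⟩)
  · rw [rowQ, sort_reverse_eq_map_sort (fun x hx => (hL θ hθ).1 (Finset.mem_sdiff.1 hx).1)
      (image_star_sdiff hβ (hL θ hθ))] at hpr
    obtain ⟨hx, h⟩ := List.mem_zip_map_self hpr
    exact ⟨(hL θ hθ).1 (Finset.mem_sdiff.1 ((Finset.mem_sort _).1 hx)).1, h⟩
  · rw [rowP, sort_reverse_eq_map_sort (fun x hx => hβ.1 (Finset.mem_sdiff.1 hx).1)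
      (image_star_sdiff (hL θ hθ) hβ)] at hpr
    obtain ⟨hx, h⟩ := List.mem_zip_map_self hpr
    exact ⟨hβ.1 (Finset.mem_sdiff.1 ((Finset.mem_sort _).1 hx)).1, h⟩

theorem ofThetas_semistandard_iff (hβ : β ∈ Itilde d) (hL : ∀ θ ∈ L, θ ∈ Itilde d) :
    (ofThetas β L).Semistandard ↔ L.IsChain IleD := by
  have hshape : (ofThetas β L).SameShape := by
    simp only [SameShape, ofThetas, List.map_map]
    exact List.map_congr_left fun θ hθ => by
      simp [rowP, rowQ, card_sdiff_comm_of_mem_itilde hβ (hL θ hθ)]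
  have hstrict : (ofThetas β L).RowStrict := by
    simp only [RowStrict, ofThetas, List.mem_map]
    exact ⟨by rintro _ ⟨θ, -, rfl⟩; exact (Finset.sortedLT_sort _).pairwise,
      by rintro _ ⟨θ, -, rfl⟩; exact (Finset.sortedLT_sort _).pairwise⟩
  have hpos : (ofThetas β L).EntriesPos := by
    simp only [EntriesPos, ofThetas, List.mem_map]
    constructor
    · rintro _ ⟨θ, hθ, rfl⟩ x hx
      exact (Finset.mem_Icc.1 ((hL θ hθ).1 (Finset.mem_sdiff.1 (mem_rowP.1 hx)).1)).1
    · rintro _ ⟨θ, -, rfl⟩ x hx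
      exact (Finset.mem_Icc.1 (hβ.1 (Finset.mem_sdiff.1 (mem_rowQ.1 hx)).1)).1
  rw [Semistandard, and_iff_right hshape, and_iff_right hstrict, and_iff_right hpos,
    List.isChain_iff_getElem, length_ofThetas_P]
  refine forall_congr' fun i => forall_congr' fun hi => ?_
  simp only [ofThetas_P_getD, ofThetas_Q_getD, List.getD_eq_getElem _ _ hi,
    List.getD_eq_getElem _ _ (Nat.lt_of_succ_lt hi)]
  exact diffLE_rows_iff
    (card_eq_of_mem_itilde (hL _ (List.getElem_mem _)) (hL _ (List.getElem_mem _)))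

theorem ofThetas_skewSymm_iff (hβ : β ∈ Itilde d) (hL : ∀ θ ∈ L, θ ∈ Itilde d) :
    (ofThetas β L).SkewSymm ↔ L.IsChain IleD := by
  rw [SkewSymm, ofThetas_semistandard_iff hβ hL, and_iff_left]
  refine ⟨?_, fun p hp q hq => ?_⟩
  · simp only [ofThetas, List.mem_map]
    rintro _ ⟨θ, hθ, rfl⟩
    rw [rowP, Finset.length_sort]
    exact even_card_sdiff_of_mem_itilde hβ (hL θ hθ)
  · obtain ⟨hp₁, hp₂⟩ := ofThetas_entryDual hβ hL p hp
    obtain ⟨hq₁, hq₂⟩ := ofThetas_entryDual hβ hL q hq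
    rw [Finset.mem_Icc] at hp₁ hq₁
    exact ⟨fun _ => by omega, fun _ => by omega, fun _ => by omega⟩

theorem ofThetas_nonvanishing_iff (hβ : β ∈ Itilde d) (hL : ∀ θ ∈ L, θ ∈ Itilde d) :
    (ofThetas β L).Nonvanishing ↔ L.IsChain IleD ∧ ∀ θ ∈ L, IltD θ β ∨ IltD β θ := by
  rw [Nonvanishing, ofThetas_semistandard_iff hβ hL, List.forall_mem_iff_getElem,
    length_ofThetas_P]
  refine and_congr_right' (forall_congr' fun i => forall_congr' fun hi => ?_)
  have hθ := hL _ (List.getElem_mem hi)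
  rw [ofThetas_P_getD, ofThetas_Q_getD, List.getD_eq_getElem _ _ hi,
    diffLT_rows_nil_iff (card_eq_of_mem_itilde hθ hβ),
    diffLT_nil_rows_iff (card_eq_of_mem_itilde hβ hθ)]

theorem ofThetas_onBB (hβ : β ∈ Itilde d) (hL : ∀ θ ∈ L, θ ∈ Itilde d) :
    (ofThetas β L).OnBB d β := by
  refine ⟨?_, ?_, fun pr hpr => ?_⟩
  · simp only [ofThetas, List.mem_map]
    rintro _ ⟨θ, hθ, rfl⟩ x hx
    obtain ⟨hxθ, hxβ⟩ := Finset.mem_sdiff.1 (mem_rowP.1 hx)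
    exact ⟨(hL θ hθ).1 hxθ, hxβ⟩
  · simp only [ofThetas, List.mem_map]
    rintro _ ⟨θ, -, rfl⟩ x hx
    exact (Finset.mem_sdiff.1 (mem_rowQ.1 hx)).1
  · obtain ⟨h₁, h₂⟩ := ofThetas_entryDual hβ hL pr hpr
    rw [Finset.mem_Icc] at h₁
    omega

theorem ofThetas_boundedByT_iff (hβ : β ∈ Itilde d) (hL : ∀ θ ∈ L, θ ∈ Itilde d)
    {α : Finset ℕ} {T : Finset (ℕ × ℕ)} (hα : α ∈ Itilde d)
    (hT₁ : T.val.map Prod.fst = (α \ β).val) (hT₂ : T.val.map Prod.snd = (β \ α).val) :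
    (ofThetas β L).BoundedByT T ↔ (IltD (L.getD 0 β) β → IleD α (L.getD 0 β)) := by
  have hθ := getD_mem_itilde hβ hL 0
  rw [BoundedByT, ofThetas_P_getD, ofThetas_Q_getD,
    diffLT_rows_nil_iff (card_eq_of_mem_itilde hθ hβ),
    msLE_rows_iff hT₁ hT₂ (card_eq_of_mem_itilde hα hβ) (card_eq_of_mem_itilde hθ hβ)]

theorem ofThetas_boundedByW_iff (hβ : β ∈ Itilde d) (hL : ∀ θ ∈ L, θ ∈ Itilde d)
    {γ : Finset ℕ} {W : Finset (ℕ × ℕ)} (hγ : γ ∈ Itilde d)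
    (hW₁ : W.val.map Prod.fst = (γ \ β).val) (hW₂ : W.val.map Prod.snd = (β \ γ).val) :
    (ofThetas β L).BoundedByW W ↔
      (IltD β (L.getD (L.length - 1) β) → IleD (L.getD (L.length - 1) β) γ) := by
  have hθ := getD_mem_itilde hβ hL (L.length - 1)
  rw [BoundedByW, length_ofThetas_P, length_ofThetas_Q, ofThetas_P_getD, ofThetas_Q_getD,
    diffLT_nil_rows_iff (card_eq_of_mem_itilde hβ hθ),
    rows_msLE_iff hW₁ hW₂ (card_eq_of_mem_itilde hγ hβ) (card_eq_of_mem_itilde hθ hβ)]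

theorem ofThetas_degree (hβ : β ∈ Itilde d) (hL : ∀ θ ∈ L, θ ∈ Itilde d) :
    (ofThetas β L).degree = (L.map fun θ => (β \ θ).card).sum := by
  simp only [degree, ofThetas, List.map_map]
  congr 1
  exact List.map_congr_left fun θ hθ => by
    simp [rowP, card_sdiff_comm_of_mem_itilde hβ (hL θ hθ)]

end Bitab

section Ends

variable {α β γ : Finset ℕ} {L : List (Finset ℕ)}

theorem forall_head?_ileD_iff (hL : ∀ θ ∈ L, IltD θ β ∨ IltD β θ) (hαβ : IleD α β) :
    (∀ θ₀, L.head? = some θ₀ → IleD α θ₀) ↔ (IltD (L.getD 0 β) β → IleD α (L.getD 0 β)) := by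
  cases L with
  | nil => simp [IltD]
  | cons θ L =>
    simp only [List.head?_cons, Option.some.injEq, forall_eq', List.getD_cons_zero]
    rcases hL θ List.mem_cons_self with h | h
    · exact ⟨fun h' _ => h', fun h' => h' h⟩
    · exact ⟨fun h' _ => h', fun _ => hαβ.trans h.1⟩

theorem forall_getLast?_ileD_iff (hL : ∀ θ ∈ L, IltD θ β ∨ IltD β θ) (hβγ : IleD β γ) :
    (∀ θr, L.getLast? = some θr → IleD θr γ) ↔
      (IltD β (L.getD (L.length - 1) β) → IleD (L.getD (L.length - 1) β) γ) := by
  rcases L.eq_nil_or_concat with rfl | ⟨L, θ, rfl⟩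
  · simp [IltD]
  · simp only [List.concat_eq_append, List.getLast?_concat, Option.some.injEq, forall_eq',
      List.length_append, List.length_singleton, Nat.add_sub_cancel]
    rw [List.getD_eq_getElem _ _ (by simp), List.getElem_concat_length rfl]
    rcases hL θ (by simp) with h | h
    · exact ⟨fun h' _ => h', fun _ => h.1.trans hβγ⟩
    · exact ⟨fun h' _ => h', fun h' => h' h⟩

end Ends

theorem Bitab.ofThetas_mem_iff {d m : ℕ} {α β γ : Finset ℕ}
    (hα : α ∈ Itilde d) (hβ : β ∈ Itilde d) (hγ : γ ∈ Itilde d)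
    (hαβ : IleD α β) (hβγ : IleD β γ) {T W : Finset (ℕ × ℕ)}
    (hT₁ : T.val.map Prod.fst = (α \ β).val) (hT₂ : T.val.map Prod.snd = (β \ α).val)
    (hW₁ : W.val.map Prod.fst = (γ \ β).val) (hW₂ : W.val.map Prod.snd = (β \ γ).val)
    {L : List (Finset ℕ)} (hL : ∀ θ ∈ L, θ ∈ Itilde d) :
    let B := ofThetas β L
    (B.SkewSymm ∧ B.Nonvanishing ∧ B.OnBB d β ∧ B.BoundedBy T W ∧ B.degree = 2 * m) ↔
      (L.IsChain IleD ∧ (∀ θ ∈ L, IltD θ β ∨ IltD β θ) ∧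
        (∀ θ₀, L.head? = some θ₀ → IleD α θ₀) ∧ (∀ θr, L.getLast? = some θr → IleD θr γ) ∧
        (L.map (fun θ => (β \ θ).card)).sum = 2 * m) := by
  dsimp only
  rw [ofThetas_skewSymm_iff hβ hL, ofThetas_nonvanishing_iff hβ hL, BoundedBy,
    ofThetas_boundedByT_iff hβ hL hα hT₁ hT₂, ofThetas_boundedByW_iff hβ hL hγ hW₁ hW₂,
    ofThetas_degree hβ hL]
  simp only [ofThetas_onBB hβ hL, true_and]
  constructor
  · rintro ⟨hc, ⟨-, hnv⟩, ⟨hT, hW⟩, hdeg⟩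
    exact ⟨hc, hnv, (forall_head?_ileD_iff hnv hαβ).2 hT,
      (forall_getLast?_ileD_iff hnv hβγ).2 hW, hdeg⟩
  · rintro ⟨hc, hnv, hhead, hlast, hdeg⟩
    exact ⟨hc, ⟨hc, hnv⟩, ⟨(forall_head?_ileD_iff hnv hαβ).1 hhead,
      (forall_getLast?_ileD_iff hnv hβγ).1 hlast⟩, hdeg⟩

end OBRSKPaper

theorem stmt17_general (d : ℕ) (α β γ : Finset ℕ)
    (hα : α ∈ Itilde d) (hβ : β ∈ Itilde d) (hγ : γ ∈ Itilde d)
    (hαβ : IleD α β) (hβγ : IleD β γ)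
    (Tα Wγ : Finset (ℕ × ℕ))
    (hTα1 : Tα.val.map Prod.fst = (α \ β).val)
    (hTα2 : Tα.val.map Prod.snd = (β \ α).val)
    (hWγ1 : Wγ.val.map Prod.fst = (γ \ β).val)
    (hWγ2 : Wγ.val.map Prod.snd = (β \ γ).val)
    (m : ℕ) :
    Set.BijOn (fun B : Bitab => (B.P.zip B.Q).map (fun pq => rowTheta β pq.1 pq.2))
      {B : Bitab | B.SkewSymm ∧ B.Nonvanishing ∧ B.OnBB d β ∧
        B.BoundedBy Tα Wγ ∧ B.degree = 2 * m}
      {L : List (Finset ℕ) |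
        (∀ θ ∈ L, θ ∈ Itilde d) ∧
        L.Chain' IleD ∧
        (∀ θ ∈ L, IltD θ β ∨ IltD β θ) ∧
        (∀ θ₀, L.head? = some θ₀ → IleD α θ₀) ∧
        (∀ θr, L.getLast? = some θr → IleD θr γ) ∧
        (L.map (fun θ => (β \ θ).card)).sum = 2 * m} := by
  have hmem {L} := Bitab.ofThetas_mem_iff (m := m) (L := L) hα hβ hγ hαβ hβγ hTα1 hTα2 hWγ1 hWγ2
  refine ⟨fun B hB => ?_, fun B₁ hB₁ B₂ hB₂ h => ?_, fun L hL => ?_⟩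
  · have hL := Bitab.thetas_mem_itilde hβ hB.1 hB.2.2.1
    rw [← Bitab.ofThetas_thetas hB.1 hB.2.2.1] at hB
    exact ⟨hL, (hmem hL).1 hB⟩
  · calc B₁ = Bitab.ofThetas β (B₁.thetas β) := (Bitab.ofThetas_thetas hB₁.1 hB₁.2.2.1).symm
      _ = Bitab.ofThetas β (B₂.thetas β) := congrArg _ h
      _ = B₂ := Bitab.ofThetas_thetas hB₂.1 hB₂.2.2.1
  · exact ⟨Bitab.ofThetas β L, (hmem hL.1).2 hL.2, Bitab.thetas_ofThetas L⟩

/-- For `α ≤ β ≤ γ` in `Ĩ(d)`, with `T_α`, `W_γ` subsets of `β̄×β` whose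
coordinate projections are `(α∖β, β∖α)` and `(γ∖β, β∖γ)` respectively, and every positive
integer `m` : the map sending a nonvanishing skew-symmetric notched bitableau `(P,Q)` on
`β̄×β` with rows `(P_i,Q_i)` to the sequence `(θ_1,…,θ_r)`, `θ_i := P_i ∪̇ (β ∖ Q_i)`, is
a bijection from the degree-`2m` nonvanishing skew-symmetric notched bitableaux on `β̄×β`
bounded by `T_α, W_γ` onto the sequences `θ_1 ≤ ⋯ ≤ θ_r` in `Ĩ(d)` with each `θ_i < β` or
`θ_i > β`, `α ≤ θ_1`, `θ_r ≤ γ`, and total `β`-degree `m` (the `β`-degree of `τ` being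
half of `|β∖τ|`). -/
theorem stmt17 (d : ℕ) (hd : 0 < d) (α β γ : Finset ℕ)
    (hα : α ∈ Itilde d) (hβ : β ∈ Itilde d) (hγ : γ ∈ Itilde d)
    (hαβ : IleD α β) (hβγ : IleD β γ)
    (Tα Wγ : Finset (ℕ × ℕ))
    (hTα1 : Tα.val.map Prod.fst = (α \ β).val)
    (hTα2 : Tα.val.map Prod.snd = (β \ α).val)
    (hWγ1 : Wγ.val.map Prod.fst = (γ \ β).val)
    (hWγ2 : Wγ.val.map Prod.snd = (β \ γ).val)
    (hTsub : ∀ p ∈ Tα, p.1 ∈ Finset.Icc 1 (2 * d) \ β ∧ p.2 ∈ β)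
    (hWsub : ∀ p ∈ Wγ, p.1 ∈ Finset.Icc 1 (2 * d) \ β ∧ p.2 ∈ β)
    (m : ℕ) (hm : 0 < m) :
    Set.BijOn (fun B : Bitab => (B.P.zip B.Q).map (fun pq => rowTheta β pq.1 pq.2))
      {B : Bitab | B.SkewSymm ∧ B.Nonvanishing ∧ B.OnBB d β ∧
        B.BoundedBy Tα Wγ ∧ B.degree = 2 * m}
      {L : List (Finset ℕ) |
        (∀ θ ∈ L, θ ∈ Itilde d) ∧
        L.Chain' IleD ∧
        (∀ θ ∈ L, IltD θ β ∨ IltD β θ) ∧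
        (∀ θ₀, L.head? = some θ₀ → IleD α θ₀) ∧
        (∀ θr, L.getLast? = some θr → IleD θr γ) ∧
        (L.map (fun θ => (β \ θ).card)).sum = 2 * m} :=
  stmt17_general d α β γ hα hβ hγ hαβ hβγ Tα Wγ hTα1 hTα2 hWγ1 hWγ2 m
end

section
/- Let d be a positive integer, let α ≤ β ≤ γ in Ĩ(d), set (R_α,S_α) := (α∖β, β∖α), (R_γ,S_γ) := (γ∖β, β∖γ), and let T_α and W_γ be subsets of β̄×β whose multisets of first coordinates are R_α and R_γ and whose multisets of second coordinates are S_α and S_γ respectively. Then for every nonempty multiset U on OR(β), the following are equivalent: (a) the underlying set of U contains no nonvanishing extended β-chain C such that either (C^− is nonempty and T_α ≰ OBRSK(ψ^{-1}({C^−,(C^−)^#}))^up) or (C^+ is nonempty and OBRSK(ψ^{-1}({C^+,(C^+)^#}))^down ≰ W_γ); (b) the pair {U,U^#} is bounded by T_α, W_γ. -/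
/-!
A pair `π` with `ψ(π) = {U, U^#}` is rigid: on the entries of `π1` the map `x ↦ dual x` is
order-reversing by the duality property and has the same value multiset as `x ↦ 2d+1-x`, so the
two maps agree and `π` is `ψ⁻¹` of a lexicographic listing of `U` together with its `#`-image.
Inside such a pair the dual pairs of chains are exactly the `ψ⁻¹({C, C^#})` for extended
`β`-chains `C` in `U`, and their negative and positive parts are `ψ⁻¹({C^−, (C^−)^#})` and
`ψ⁻¹({C^+, (C^+)^#})`. So (b) says that `T_α ≤ OBRSK(C^−)^up` and `OBRSK(C^+)^down ≤ W_γ` for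
every such `C`. For an empty part OBRSK gives the empty bitableau, and the conditions `T_α ≤ ∅`,
`∅ ≤ W_γ` are `α ≤ β ≤ γ` in disguise: counting elements `≤ z`, `#(α∖β) ≥ #(β∖α)` and `#(β∖γ) ≥
#(γ∖β)`. What is left is (a).
-/

namespace OBRSKPaper

open Finset

lemma countP_le_countP_of_forall₂ {s t : List ℕ} (h : List.Forall₂ (· ≤ ·) s t) (z : ℕ) :
    t.countP (· ≤ z) ≤ s.countP (· ≤ z) := by
  induction h with
  | nil => rfl
  | cons hab _ ih =>
    simp only [List.countP_cons, decide_eq_true_eq]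
    split_ifs <;> omega

lemma IleD.card_filter_le {v w : Finset ℕ} (h : IleD v w) (z : ℕ) :
    #{x ∈ w | x ≤ z} ≤ #{x ∈ v | x ≤ z} := by
  have hcount (u : Finset ℕ) : #{x ∈ u | x ≤ z} = (u.sort (· ≤ ·)).countP (· ≤ z) := by
    rw [Finset.card_def, Finset.filter_val, ← Multiset.countP_eq_card_filter,
      ← Finset.sort_eq u (· ≤ ·), Multiset.coe_countP]
  rw [hcount, hcount]
  refine countP_le_countP_of_forall₂ (List.forall₂_iff_get.2 ⟨by simp [h.1], fun i hv hw => ?_⟩) z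
  have := h.2 i (by simpa using hv)
  rwa [List.getD_eq_getElem _ _ hv, List.getD_eq_getElem _ _ hw] at this

lemma IleD.card_filter_sdiff_le {v w : Finset ℕ} (h : IleD v w) (z : ℕ) :
    #{x ∈ w \ v | x ≤ z} ≤ #{x ∈ v \ w | x ≤ z} := by
  have hdistrib (s t : Finset ℕ) : {x ∈ s \ t | x ≤ z} = {x ∈ s | x ≤ z} \ {x ∈ t | x ≤ z} := by
    ext; simp only [mem_filter, mem_sdiff]; tauto
  rw [hdistrib, hdistrib, card_sdiff_le_card_sdiff_iff]
  exact h.card_filter_le z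

lemma card_filter_eq_of_map_eq {M : Multiset (ℕ × ℕ)} {f : ℕ × ℕ → ℕ} {F : Finset ℕ}
    (hMF : M.map f = F.val) (z : ℕ) : (M.filter (fun p => f p ≤ z)).card = #{x ∈ F | x ≤ z} := by
  rw [← Multiset.countP_map f M (· ≤ z), hMF, Multiset.countP_eq_card_filter]
  rfl

lemma msLE_zero_of_IleD {v w : Finset ℕ} (h : IleD v w) {M : Multiset (ℕ × ℕ)}
    (h₁ : M.map Prod.fst = (v \ w).val) (h₂ : M.map Prod.snd = (w \ v).val) : msLE M 0 := by
  intro z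
  rw [card_filter_eq_of_map_eq h₁, card_filter_eq_of_map_eq h₂]
  simpa using h.card_filter_sdiff_le z

lemma zero_msLE_of_IleD {v w : Finset ℕ} (h : IleD v w) {M : Multiset (ℕ × ℕ)}
    (h₁ : M.map Prod.fst = (w \ v).val) (h₂ : M.map Prod.snd = (v \ w).val) : msLE 0 M := by
  intro z
  rw [card_filter_eq_of_map_eq h₁, card_filter_eq_of_map_eq h₂]
  simpa using h.card_filter_sdiff_le z

lemma countP_lt_countP_of_imp {α : Type*} {l : List α} {p q : α → Bool}
    (hqp : ∀ b ∈ l, q b → p b) {a : α} (ha : a ∈ l) (hpa : p a) (hqa : ¬ q a) :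
    l.countP q < l.countP p := by
  obtain ⟨s, t, rfl⟩ := List.append_of_mem ha
  have hs : s.countP q ≤ s.countP p := List.countP_mono_left fun b hb => hqp b (by simp [hb])
  have ht : t.countP q ≤ t.countP p := List.countP_mono_left fun b hb => hqp b (by simp [hb])
  simp only [List.countP_append, List.countP_cons, hpa, hqa, if_true, Bool.false_eq_true,
    if_false]
  omega

lemma eq_of_perm_map_of_le_iff {α : Type*} {l : List α} {f g : α → ℕ}
    (hperm : (l.map f).Perm (l.map g)) (hle : ∀ p ∈ l, ∀ q ∈ l, f q ≤ f p ↔ g q ≤ g p) :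
    ∀ p ∈ l, f p = g p := by
  have hcount (z : ℕ) : l.countP (f · ≤ z) = l.countP (g · ≤ z) := by
    simpa [List.countP_map, Function.comp_def] using hperm.countP_eq (· ≤ z)
  intro p hp
  -- `f` and `g` give `p` the same rank, and the counts below depend only on the value multiset
  have hrank : l.countP (f · ≤ f p) = l.countP (g · ≤ g p) :=
    List.countP_congr fun q hq => by simpa using hle p hp q hq
  by_contra hne
  rcases Nat.lt_or_gt_of_ne hne with hlt | hgt
  · have := countP_lt_countP_of_imp (p := (g · ≤ g p)) (q := (g · ≤ f p))
      (fun b _ hb => by simp only [decide_eq_true_eq] at hb ⊢; omega) hp (by simp)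
      (by simpa using hlt)
    have := hcount (f p)
    omega
  · have := countP_lt_countP_of_imp (p := (f · ≤ f p)) (q := (f · ≤ g p))
      (fun b _ hb => by simp only [decide_eq_true_eq] at hb ⊢; omega) hp (by simp)
      (by simpa using hgt)
    have := hcount (g p)
    omega

lemma map_fst_zip_comp {α β γ : Type*} {x : List α} {y : List β} (h : x.length ≤ y.length)
    (f : α → γ) : (x.zip y).map (fun p => f p.1) = x.map f := by
  change (x.zip y).map (f ∘ Prod.fst) = _
  rw [← List.map_map, List.map_fst_zip h]

lemma map_snd_zip_comp {α β γ : Type*} {x : List α} {y : List β} (h : y.length ≤ x.length)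
    (f : β → γ) : (x.zip y).map (fun p => f p.2) = y.map f := by
  change (x.zip y).map (f ∘ Prod.snd) = _
  rw [← List.map_map, List.map_snd_zip h]

lemma reverse_eq_map_sub_of_dualityProp {n : ℕ} {x y : List ℕ} (hlen : x.length = y.length)
    (hx : ∀ v ∈ x, 1 ≤ v ∧ v ≤ n) (hdual : DualityProp (x.zip y.reverse))
    (hms : (↑y : Multiset ℕ) = (↑x : Multiset ℕ).map (n + 1 - ·)) :
    y.reverse = x.map (n + 1 - ·) := by
  have hsnd : (x.zip y.reverse).map Prod.snd = y.reverse := List.map_snd_zip (by simp [hlen])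
  have hcompl : (x.zip y.reverse).map (fun p => n + 1 - p.1) = x.map (n + 1 - ·) :=
    map_fst_zip_comp (by simp [hlen]) _
  have hperm : ((x.zip y.reverse).map Prod.snd).Perm
      ((x.zip y.reverse).map fun p => n + 1 - p.1) := by
    rw [hsnd, hcompl, ← Multiset.coe_eq_coe, Multiset.coe_reverse, hms, Multiset.map_coe]
  have hle : ∀ p ∈ x.zip y.reverse, ∀ q ∈ x.zip y.reverse,
      q.2 ≤ p.2 ↔ n + 1 - q.1 ≤ n + 1 - p.1 := by
    intro p hp q hq
    have hpx := hx _ (List.of_mem_zip hp).1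
    have hqx := hx _ (List.of_mem_zip hq).1
    have hpq := hdual p hp q hq
    have hqp := hdual q hq p hp
    constructor
    · intro h
      by_contra
      have := hqp.2.1 (by omega)
      omega
    · intro h
      exact hpq.1 (by omega)
  rw [← hsnd, ← hcompl]
  exact List.map_congr_left (eq_of_perm_map_of_le_iff hperm hle)

lemma reverse_eq_map_of_getD {x y : List ℕ} {f : ℕ → ℕ} (hlen : x.length = y.length)
    (h : ∀ i < x.length, y.getD (x.length - 1 - i) 0 = f (x.getD i 0)) : y.reverse = x.map f := by
  refine List.ext_getElem (by simp [hlen]) fun i hy hx => ?_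
  rw [List.length_map] at hx
  have := h i hx
  rw [List.getD_eq_getElem _ _ (by omega), List.getD_eq_getElem _ _ hx] at this
  simp only [List.getElem_reverse, List.getElem_map, ← this, hlen]

lemma dualityProp_of_forall_eq_sub {n : ℕ} {l : List (ℕ × ℕ)}
    (h : ∀ q ∈ l, q.1 ≤ n ∧ q.2 = n + 1 - q.1) : DualityProp l := by
  intro p hp q hq
  have := h p hp
  have := h q hq
  refine ⟨fun _ => ?_, fun _ => ?_, fun _ => ?_⟩ <;> omega

lemma lexTwoRow_of_isChain {l : List (ℕ × ℕ)}
    (h : l.IsChain fun x y => y.1 ≤ x.1 ∧ (y.1 = x.1 → y.2 ≤ x.2)) :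
    LexTwoRow (l.map Prod.fst) (l.map Prod.snd) := by
  intro k hk
  rw [List.length_map] at hk
  simp only [List.getD_eq_getElem?_getD, List.getElem?_map, List.getElem?_eq_getElem hk,
    List.getElem?_eq_getElem (by omega : k < l.length), Option.map_some, Option.getD_some]
  exact List.isChain_iff_getElem.1 h k hk

lemma isExtChain_zip {l₁ l₂ : List ℕ} (h : l₁.length = l₂.length)
    (h₁ : List.IsChain (· < ·) l₁) (h₂ : List.IsChain (· > ·) l₂) : IsExtChain (l₁.zip l₂) := by
  rw [List.isChain_iff_getElem] at h₁ h₂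
  refine List.isChain_iff_getElem.2 fun i hi => ?_
  simp only [List.length_zip] at hi
  simp only [List.getElem_zip]
  exact ⟨h₁ i (by omega), h₂ i (by omega)⟩

def InTriangle (d : ℕ) (p : ℕ × ℕ) : Prop := 1 ≤ p.1 ∧ 1 ≤ p.2 ∧ p.1 + p.2 ≤ 2 * d

-- the column order of a lexicographic two-row array with top row `l.map Prod.snd`
def ColSorted (l : List (ℕ × ℕ)) : Prop :=
  l.IsChain fun p q => q.2 ≤ p.2 ∧ (q.2 = p.2 → q.1 ≤ p.1)

lemma ColSorted.of_isExtChain {l : List (ℕ × ℕ)} (h : IsExtChain l) : ColSorted l :=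
  List.IsChain.imp (fun _ _ hpq => ⟨hpq.2.le, fun h => by omega⟩) h

lemma exists_colSorted_perm (l : List (ℕ × ℕ)) : ∃ L, ColSorted L ∧ L.Perm l := by
  let le : ℕ × ℕ → ℕ × ℕ → Bool := fun p q => decide (q.2 ≤ p.2 ∧ (q.2 = p.2 → q.1 ≤ p.1))
  have hsorted := List.pairwise_mergeSort (le := le)
    (fun a b c hab hbc => by simp only [le, decide_eq_true_eq] at *; omega)
    (fun a b => by simp only [le, Bool.or_eq_true, decide_eq_true_eq]; omega) l
  exact ⟨_, hsorted.isChain.imp fun _ _ h => of_decide_eq_true h, List.mergeSort_perm _ _⟩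

section chainToPair

variable (d : ℕ) (l : List (ℕ × ℕ))

lemma chainToPair_t : (chainToPair d l).t = l.length := by
  simp [ArrayPair.t, chainToPair]

lemma chainToPair_zip_ab : (chainToPair d l).a.zip (chainToPair d l).b = l := by
  simp [chainToPair, List.zip_map']

lemma chainToPair_zip_cd : (chainToPair d l).c.zip (chainToPair d l).d =
    (l.map fun p => (2 * d + 1 - p.1, 2 * d + 1 - p.2)).reverse := by
  simp only [chainToPair, ← List.map_reverse, List.zip_map']

lemma chainToPair_zip_dc : (chainToPair d l).d.zip (chainToPair d l).c =
    (l.map fun p => (2 * d + 1 - p.2, 2 * d + 1 - p.1)).reverse := by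
  simp only [chainToPair, ← List.map_reverse, List.zip_map']

lemma chainToPair_toMS : (chainToPair d l).toMS = (↑l, hashMS d ↑l) := by
  simp [ArrayPair.toMS, chainToPair_zip_ab, chainToPair_zip_dc, hashMS]

lemma chainToPair_getD {i : ℕ} (hi : i < l.length) :
    (chainToPair d l).a.getD i 0 = l[i].1 ∧ (chainToPair d l).b.getD i 0 = l[i].2 ∧
    (chainToPair d l).c.getD (l.length - 1 - i) 0 = 2 * d + 1 - l[i].1 ∧
    (chainToPair d l).d.getD (l.length - 1 - i) 0 = 2 * d + 1 - l[i].2 := by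
  simp only [chainToPair]
  refine ⟨?_, ?_, ?_, ?_⟩ <;>
    rw [List.getD_eq_getElem _ _ (by simp; omega)] <;>
    simp [List.getElem_reverse, show l.length - 1 - (l.length - 1 - i) = i by omega]

end chainToPair

variable {d : ℕ}

section chainToPair

variable {l : List (ℕ × ℕ)}

lemma chainToPair_skewSymmLex (hl : ∀ p ∈ l, InTriangle d p) (hs : ColSorted l) :
    (chainToPair d l).SkewSymmLex := by
  have hzip : ∀ f g : ℕ × ℕ → ℕ,
      (l.map f).zip (l.map g).reverse.reverse = l.map fun p => (f p, g p) := by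
    simp [List.zip_map']
  have hzip_rev : ∀ f g : ℕ × ℕ → ℕ,
      (l.map f).reverse.zip (l.map g).reverse = (l.map fun p => (f p, g p)).reverse := by
    simp [← List.map_reverse, List.zip_map']
  refine ⟨?_, ?_, ?_, ?_, ?_, ?_, ?_, fun i hi => ?_⟩
  · simp [ArrayPair.eqLen, ArrayPair.t, chainToPair]
  · simp only [chainToPair, List.mem_append, List.mem_reverse, List.mem_map]
    rintro x (((⟨p, hp, rfl⟩ | ⟨p, hp, rfl⟩) | ⟨p, hp, rfl⟩) | ⟨p, hp, rfl⟩) <;>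
      · have := hl p hp; unfold InTriangle at this; omega
  · simpa [chainToPair, Function.comp_def] using
      lexTwoRow_of_isChain ((List.isChain_map Prod.swap).2 hs)
  · have hsorted : ((l.map fun p => (2 * d + 1 - p.2, 2 * d + 1 - p.1)).reverse).IsChain
        fun x y => y.1 ≤ x.1 ∧ (y.1 = x.1 → y.2 ≤ x.2) :=
      List.isChain_reverse.2 <| (List.isChain_map _).2 <| hs.imp_of_mem_imp fun p q hp hq h => by
        have := hl p hp; have := hl q hq; unfold InTriangle at *; dsimp only; omega
    simpa [chainToPair, Function.comp_def] using lexTwoRow_of_isChain hsorted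
  · simp only [chainToPair, hzip, List.mem_map]
    rintro _ ⟨p, hp, rfl⟩
    have := hl p hp; unfold InTriangle at this; dsimp only; omega
  · simp only [chainToPair, hzip, List.mem_map]
    rintro _ ⟨p, hp, rfl⟩
    have := hl p hp; unfold InTriangle at this; dsimp only; omega
  · refine dualityProp_of_forall_eq_sub (n := 2 * d) fun q hq => ?_
    simp only [ArrayPair.entryDual, chainToPair, hzip, hzip_rev, List.mem_append, List.mem_reverse,
      List.mem_map] at hq
    rcases hq with ((⟨p, hp, rfl⟩ | ⟨p, hp, rfl⟩) | ⟨p, hp, rfl⟩) | ⟨p, hp, rfl⟩ <;>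
      · have := hl p hp; unfold InTriangle at this; dsimp only; omega
  · rw [chainToPair_t] at hi ⊢
    obtain ⟨ha, hb, hc, hd⟩ := chainToPair_getD d l hi
    rw [ha, hb, hc, hd]
    have := hl _ (List.getElem_mem hi); unfold InTriangle at this
    constructor <;> intro <;> omega

lemma chainToPair_filter (q q' : ℕ × ℕ → Bool)
    (h : ∀ p ∈ l, q' (2 * d + 1 - p.1, 2 * d + 1 - p.2) = q p) :
    (⟨(((chainToPair d l).a.zip (chainToPair d l).b).filter q).map Prod.fst,
      (((chainToPair d l).a.zip (chainToPair d l).b).filter q).map Prod.snd,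
      (((chainToPair d l).c.zip (chainToPair d l).d).filter q').map Prod.fst,
      (((chainToPair d l).c.zip (chainToPair d l).d).filter q').map Prod.snd⟩ : ArrayPair) =
      chainToPair d (l.filter q) := by
  have hfilter : (l.map fun p => (2 * d + 1 - p.1, 2 * d + 1 - p.2)).filter q' =
      (l.filter q).map fun p => (2 * d + 1 - p.1, 2 * d + 1 - p.2) := by
    rw [List.filter_map]
    exact congrArg _ (List.filter_congr h)
  simp only [chainToPair_zip_ab, chainToPair_zip_cd, List.filter_reverse, hfilter,
    List.map_reverse, List.map_map]
  rfl

lemma negPart_chainToPair (hl : ∀ p ∈ l, InTriangle d p) :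
    (chainToPair d l).negPart = chainToPair d (chainNeg l) :=
  chainToPair_filter _ _ fun p hp => by
    have := hl p hp; unfold InTriangle at this; simp only [decide_eq_decide]; omega

lemma posPart_chainToPair (hl : ∀ p ∈ l, InTriangle d p) :
    (chainToPair d l).posPart = chainToPair d (chainPos l) :=
  chainToPair_filter _ _ fun p hp => by
    have := hl p hp; unfold InTriangle at this; simp only [decide_eq_decide]; omega

end chainToPair

lemma OBRSK_chainToPair_nil : OBRSK (chainToPair d []) = ⟨[], []⟩ := by
  simp [OBRSK, OBRSKneg, OBRSKpos, Lmap, ArrayPair.negPart, ArrayPair.posPart, chainToPair,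
    stepState, ArrayPair.quads, ArrayPair.t, iota]

lemma eq_chainToPair_of_reverse {σ : ArrayPair} (hlen : σ.eqLen)
    (hc : σ.c.reverse = σ.a.map (2 * d + 1 - ·)) (hd : σ.d.reverse = σ.b.map (2 * d + 1 - ·)) :
    σ = chainToPair d (σ.a.zip σ.b) := by
  have hab : σ.a.length = σ.b.length := hlen.1
  obtain ⟨a, b, c, d'⟩ := σ
  simp only [chainToPair, ArrayPair.mk.injEq]
  refine ⟨(List.map_fst_zip hab.le).symm, (List.map_snd_zip hab.ge).symm, ?_, ?_⟩
  · rw [← List.reverse_reverse c, hc, map_fst_zip_comp hab.le]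
  · rw [← List.reverse_reverse d', hd, map_snd_zip_comp hab.ge]

lemma eq_chainToPair_of_toMS {π : ArrayPair} (hπ : π.SkewSymmLex)
    (hl : ∀ p ∈ π.a.zip π.b, InTriangle d p)
    (hms : (↑(π.d.zip π.c) : Multiset (ℕ × ℕ)) = hashMS d ↑(π.a.zip π.b)) :
    π = chainToPair d (π.a.zip π.b) := by
  obtain ⟨hlen, -, -, -, -, -, hdual, -⟩ := hπ
  obtain ⟨ha, hc, hd⟩ := hlen
  have hab : π.a.length = π.b.length := ha
  have hrows : (↑π.c : Multiset ℕ) = (↑π.a : Multiset ℕ).map (2 * d + 1 - ·) ∧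
      (↑π.d : Multiset ℕ) = (↑π.b : Multiset ℕ).map (2 * d + 1 - ·) := by
    have hsnd := congrArg (Multiset.map Prod.snd) hms
    have hfst := congrArg (Multiset.map Prod.fst) hms
    simp only [hashMS, Multiset.map_coe, List.map_map, Function.comp_def] at hsnd hfst
    rw [List.map_snd_zip (by omega), map_fst_zip_comp hab.le] at hsnd
    rw [List.map_fst_zip (by omega), map_snd_zip_comp hab.ge] at hfst
    exact ⟨hsnd, hfst⟩
  have hbound : ∀ p ∈ π.a.zip π.b, (1 ≤ p.1 ∧ p.1 ≤ 2 * d) ∧ (1 ≤ p.2 ∧ p.2 ≤ 2 * d) := by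
    intro p hp; have := hl p hp; unfold InTriangle at this; omega
  refine eq_chainToPair_of_reverse ⟨ha, hc, hd⟩ ?_ ?_
  · refine reverse_eq_map_sub_of_dualityProp (by omega) (fun v hv => ?_)
      (fun p hp q hq => hdual p (by simp [ArrayPair.entryDual, hp]) q
        (by simp [ArrayPair.entryDual, hq])) hrows.1
    rw [← List.map_fst_zip hab.le] at hv
    obtain ⟨p, hp, rfl⟩ := List.mem_map.1 hv
    exact (hbound p hp).1
  · refine reverse_eq_map_sub_of_dualityProp (by omega) (fun v hv => ?_)
      (fun p hp q hq => hdual p (by simp [ArrayPair.entryDual, hp]) q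
        (by simp [ArrayPair.entryDual, hq])) hrows.2
    rw [← List.map_snd_zip hab.ge] at hv
    obtain ⟨p, hp, rfl⟩ := List.mem_map.1 hv
    exact (hbound p hp).2

lemma dualColumn_chainToPair {L : List (ℕ × ℕ)} {x : ℕ × ℕ} (hx : x ∈ L) :
    let π := chainToPair d L
    let j := (π.b.zip π.a).findIdx (· == (x.2, x.1))
    (π.c.getD (π.t - 1 - j) 0, π.d.getD (π.t - 1 - j) 0) = (2 * d + 1 - x.1, 2 * d + 1 - x.2) := by
  have hba : (chainToPair d L).b.zip (chainToPair d L).a = L.map Prod.swap := by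
    simp [chainToPair, List.zip_map']
  have hj : (L.map Prod.swap).findIdx (· == (x.2, x.1)) < (L.map Prod.swap).length :=
    List.findIdx_lt_length.2 ⟨_, List.mem_map.2 ⟨x, hx, rfl⟩, by simp [Prod.swap]⟩
  have hLj := List.findIdx_getElem (w := hj)
  rw [List.length_map] at hj
  simp only [List.getElem_map, beq_iff_eq, Prod.swap_eq_iff_eq_swap] at hLj
  obtain ⟨-, -, hc, hd⟩ := chainToPair_getD d L hj
  simp only [hba, chainToPair_t, hc, hd, hLj, Prod.swap_prod_mk]

theorem dualChainIn_chainToPair_iff {L : List (ℕ × ℕ)} {σ : ArrayPair}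
    (hL : ∀ p ∈ L, InTriangle d p) :
    DualChainIn (chainToPair d L) σ ↔
      ∃ ch, IsExtChain ch ∧ (∀ x ∈ ch, x ∈ L) ∧ σ = chainToPair d ch := by
  constructor
  · rintro ⟨⟨hσ, ha, hb⟩, hab, -, hcol⟩
    obtain ⟨ha_len, hc_len, hd_len⟩ := hσ.1
    have hb_len : σ.b.length = σ.t := rfl
    rw [chainToPair_zip_ab] at hab
    have hdual : ∀ i < σ.t, σ.c.getD (σ.t - 1 - i) 0 = 2 * d + 1 - σ.a.getD i 0 ∧
        σ.d.getD (σ.t - 1 - i) 0 = 2 * d + 1 - σ.b.getD i 0 := by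
      intro i hi
      have hmem : (σ.a.getD i 0, σ.b.getD i 0) ∈ L := by
        apply hab
        rw [List.mem_iff_getElem]
        refine ⟨i, by simp; omega, ?_⟩
        simp [List.getElem?_eq_getElem (by omega : i < σ.a.length),
          List.getElem?_eq_getElem (by omega : i < σ.b.length)]
      have := hcol i hi
      rw [dualColumn_chainToPair hmem, Prod.mk.injEq] at this
      exact ⟨this.1.symm, this.2.symm⟩
    refine ⟨σ.a.zip σ.b, isExtChain_zip ha_len ha hb, hab,
      eq_chainToPair_of_reverse hσ.1 ?_ ?_⟩
    · exact reverse_eq_map_of_getD (by omega) fun i hi => by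
        rw [ha_len]; exact (hdual i (by omega)).1
    · exact reverse_eq_map_of_getD (by omega) fun i hi => (hdual i hi).2
  · rintro ⟨ch, hch, hchL, rfl⟩
    refine ⟨⟨chainToPair_skewSymmLex (fun p hp => hL p (hchL p hp))
        (ColSorted.of_isExtChain hch), ?_, ?_⟩, ?_, ?_, fun i hi => ?_⟩
    · exact (List.isChain_map _).2 (hch.imp fun _ _ h => h.1)
    · exact (List.isChain_map _).2 (hch.imp fun _ _ h => h.2)
    · rwa [chainToPair_zip_ab, chainToPair_zip_ab]
    · simp only [chainToPair_zip_dc, List.mem_reverse, List.mem_map]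
      rintro _ ⟨q, hq, rfl⟩
      exact ⟨q, hchL q hq, rfl⟩
    · rw [chainToPair_t] at hi
      obtain ⟨ha, hb, hc, hd⟩ := chainToPair_getD d ch hi
      rw [ha, hb, dualColumn_chainToPair (x := ch[i]) (hchL _ (List.getElem_mem hi)),
        chainToPair_t, hc, hd]

variable {U : Multiset (ℕ × ℕ)} {T W : Finset (ℕ × ℕ)}

def ChainsBounded (d : ℕ) (U : Multiset (ℕ × ℕ)) (T W : Finset (ℕ × ℕ)) : Prop :=
  ∀ ch, IsExtChain ch → (∀ x ∈ ch, x ∈ U) →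
    msLE ↑T.val (OBRSK (chainToPair d (chainNeg ch))).up ∧
      msLE (OBRSK (chainToPair d (chainPos ch))).down ↑W.val

lemma pairBounded_chainToPair_iff {L : List (ℕ × ℕ)} (hL : ∀ p ∈ L, InTriangle d p) :
    PairBounded (chainToPair d L) T W ↔ ChainsBounded d ↑L T W := by
  simp only [PairBounded, PairBoundedT, PairBoundedW, dualChainIn_chainToPair_iff hL,
    ChainsBounded, Multiset.mem_coe]
  constructor
  · rintro ⟨hT, hW⟩ ch hch hchL
    have hchT : ∀ p ∈ ch, InTriangle d p := fun p hp => hL p (hchL p hp)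
    refine ⟨?_, ?_⟩
    · simpa only [negPart_chainToPair hchT] using hT _ ⟨ch, hch, hchL, rfl⟩
    · simpa only [posPart_chainToPair hchT] using hW _ ⟨ch, hch, hchL, rfl⟩
  · intro h
    have hchT {ch : List (ℕ × ℕ)} (hchL : ∀ x ∈ ch, x ∈ L) : ∀ p ∈ ch, InTriangle d p :=
      fun p hp => hL p (hchL p hp)
    refine ⟨?_, ?_⟩ <;> rintro _ ⟨ch, hch, hchL, rfl⟩
    · rw [negPart_chainToPair (hchT hchL)]
      exact (h ch hch hchL).1
    · rw [posPart_chainToPair (hchT hchL)]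
      exact (h ch hch hchL).2

theorem forall_pairBounded_iff_chainsBounded (hU : ∀ p ∈ U, InTriangle d p) :
    (∀ π : ArrayPair, π.SkewSymmLex → π.toMS = (U, hashMS d U) → PairBounded π T W) ↔
      ChainsBounded d U T W := by
  constructor
  · intro h
    obtain ⟨L, hsorted, hperm⟩ := exists_colSorted_perm U.toList
    have hLU : (↑L : Multiset (ℕ × ℕ)) = U := by
      rw [Multiset.coe_eq_coe.2 hperm, Multiset.coe_toList]
    have hL : ∀ p ∈ L, InTriangle d p := fun p hp => hU p (hLU ▸ Multiset.mem_coe.2 hp)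
    have := h _ (chainToPair_skewSymmLex hL hsorted) (by rw [chainToPair_toMS, hLU])
    rwa [pairBounded_chainToPair_iff hL, hLU] at this
  · intro h π hπ hms
    have hab : (↑(π.a.zip π.b) : Multiset (ℕ × ℕ)) = U := congrArg Prod.fst hms
    have hl : ∀ p ∈ π.a.zip π.b, InTriangle d p := fun p hp => hU p (hab ▸ Multiset.mem_coe.2 hp)
    rw [eq_chainToPair_of_toMS hπ hl (by rw [hab]; exact congrArg Prod.snd hms),
      pairBounded_chainToPair_iff hl, hab]
    exact h

end OBRSKPaper

open OBRSKPaper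

theorem stmt18_general (d : ℕ) (α β γ : Finset ℕ)
    (hβ : β ∈ Itilde d)
    (hαβ : IleD α β) (hβγ : IleD β γ)
    (Tα Wγ : Finset (ℕ × ℕ))
    (hTα1 : Tα.val.map Prod.fst = (α \ β).val)
    (hTα2 : Tα.val.map Prod.snd = (β \ α).val)
    (hWγ1 : Wγ.val.map Prod.fst = (γ \ β).val)
    (hWγ2 : Wγ.val.map Prod.snd = (β \ γ).val)
    (U : Multiset (ℕ × ℕ)) (hUOR : ∀ x ∈ U, x ∈ ORset d β) :
    (¬ ∃ ch : List (ℕ × ℕ), IsExtChain ch ∧ (∀ x ∈ ch, x ∈ U) ∧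
        (chainNeg ch ≠ [] ∨ chainPos ch ≠ []) ∧
        ((chainNeg ch ≠ [] ∧
            ¬ msLE ↑Tα.val (OBRSK (chainToPair d (chainNeg ch))).up) ∨
         (chainPos ch ≠ [] ∧
            ¬ msLE (OBRSK (chainToPair d (chainPos ch))).down ↑Wγ.val)))
      ↔
      (∀ π : ArrayPair, π.SkewSymmLex → π.toMS = (U, hashMS d U) →
        PairBounded π Tα Wγ) := by
  have hU : ∀ p ∈ U, InTriangle d p := fun p hp => by
    obtain ⟨h₁, -, h₂, h₃⟩ := hUOR p hp
    have := Finset.mem_Icc.1 (hβ.1 h₂)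
    rw [Finset.mem_Icc] at h₁
    exact ⟨h₁.1, this.1, by omega⟩
  have hT : msLE ↑Tα.val 0 := msLE_zero_of_IleD hαβ hTα1 hTα2
  have hW : msLE 0 ↑Wγ.val := zero_msLE_of_IleD hβγ hWγ1 hWγ2
  rw [forall_pairBounded_iff_chainsBounded hU]
  constructor
  · intro hno ch hch hchU
    constructor
    · by_cases hneg : chainNeg ch = []
      · rwa [hneg, OBRSK_chainToPair_nil]
      · exact not_not.1 fun hbad => hno ⟨ch, hch, hchU, .inl hneg, .inl ⟨hneg, hbad⟩⟩
    · by_cases hpos : chainPos ch = []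
      · rwa [hpos, OBRSK_chainToPair_nil]
      · exact not_not.1 fun hbad => hno ⟨ch, hch, hchU, .inr hpos, .inr ⟨hpos, hbad⟩⟩
  · rintro hall ⟨ch, hch, hchU, -, ⟨-, hbad⟩ | ⟨-, hbad⟩⟩
    exacts [hbad (hall ch hch hchU).1, hbad (hall ch hch hchU).2]

/-- For `α ≤ β ≤ γ` in `Ĩ(d)`, `T_α`, `W_γ` as in the paper, and every
nonempty multiset `U` on `OR(β)`, the following are equivalent:
(a) the underlying set of `U` contains no nonvanishing extended `β`-chain `C` such that
either (`C⁻` is nonempty and `T_α ≰ OBRSK(ψ⁻¹({C⁻,(C⁻)^#}))^up`) or (`C⁺` is nonempty and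
`OBRSK(ψ⁻¹({C⁺,(C⁺)^#}))^down ≰ W_γ`);
(b) the pair `{U,U^#}` is bounded by `T_α, W_γ`. -/
theorem stmt18 (d : ℕ) (hd : 0 < d) (α β γ : Finset ℕ)
    (hα : α ∈ Itilde d) (hβ : β ∈ Itilde d) (hγ : γ ∈ Itilde d)
    (hαβ : IleD α β) (hβγ : IleD β γ)
    (Tα Wγ : Finset (ℕ × ℕ))
    (hTα1 : Tα.val.map Prod.fst = (α \ β).val)
    (hTα2 : Tα.val.map Prod.snd = (β \ α).val)
    (hWγ1 : Wγ.val.map Prod.fst = (γ \ β).val)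
    (hWγ2 : Wγ.val.map Prod.snd = (β \ γ).val)
    (hTsub : ∀ p ∈ Tα, p.1 ∈ Finset.Icc 1 (2 * d) \ β ∧ p.2 ∈ β)
    (hWsub : ∀ p ∈ Wγ, p.1 ∈ Finset.Icc 1 (2 * d) \ β ∧ p.2 ∈ β)
    (U : Multiset (ℕ × ℕ)) (hU0 : U ≠ 0) (hUOR : ∀ x ∈ U, x ∈ ORset d β) :
    (¬ ∃ ch : List (ℕ × ℕ), IsExtChain ch ∧ (∀ x ∈ ch, x ∈ U) ∧
        (chainNeg ch ≠ [] ∨ chainPos ch ≠ []) ∧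
        ((chainNeg ch ≠ [] ∧
            ¬ msLE ↑Tα.val (OBRSK (chainToPair d (chainNeg ch))).up) ∨
         (chainPos ch ≠ [] ∧
            ¬ msLE (OBRSK (chainToPair d (chainPos ch))).down ↑Wγ.val)))
      ↔
      (∀ π : ArrayPair, π.SkewSymmLex → π.toMS = (U, hashMS d U) →
        PairBounded π Tα Wγ) :=
  stmt18_general d α β γ hβ hαβ hβγ Tα Wγ hTα1 hTα2 hWγ1 hWγ2 U hUOR
end
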